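/- arXiv:1802.06879 — 12 statements merged into one kernel-verified Lean document; each statement's English description precedes it below -/
import Mathlib

section
/- Let (X,b,m) be a connected, locally finite, countably infinite weighted graph and let p : [0,∞)×X×X→ℝ satisfy: p_t(x,y)>0 for all t>0; symmetry p_t(x,y)=p_t(y,x); the semigroup identity p_{s+t}(x,y)=∑_{z∈X} p_s(x,z)p_t(z,y)m(z) for all s,t≥0; the sub-Markov bound ∑_{y∈X} p_t(x,y)m(y)≤1; the diagonal lower bound p_t(x,x)·m(x) ≥ e^{−t·Deg(x)}; and continuity of t↦p_t(x,y) on [0,∞) for all x,y. Then the following are equivalent: (i) there exist t₀>0 and x₀∈X such that p_{t₀}(x₀,·) vanishes at infinity; (ii) for every t>0 and every x∈X the function p_t(x,·) vanishes at infinity; (iii) for every T>0 and every x∈X the function y ↦ sup_{t∈[0,T]} p_t(x,y) vanishes at infinity. -/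
open Filter Topology

/-- A function on a countable set vanishes at infinity if, for every `ε > 0`,
the set where `|f| ≥ ε` is finite. -/
def VanishesAtInfty {V : Type*} (f : V → ℝ) : Prop :=
  ∀ ε > (0 : ℝ), {x | ε ≤ |f x|}.Finite

/-- `(X, b, m)` is a weighted graph: `b` is a nonnegative symmetric edge weight with
vanishing diagonal, each vertex has finitely many neighbours, the measure `m` is
positive, and the graph is connected. -/
def IsWeightedGraph {V : Type*} (b : V → V → ℝ) (m : V → ℝ) : Prop :=
  (∀ x y, 0 ≤ b x y) ∧ (∀ x y, b x y = b y x) ∧ (∀ x, b x x = 0) ∧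
    (∀ x, {y | 0 < b x y}.Finite) ∧ (∀ x, 0 < m x) ∧
    (∀ x y, Relation.ReflTransGen (fun a c => 0 < b a c) x y)

/-- The formal graph Laplacian `𝓛f(x) = (1/m x) ∑_y b x y (f x − f y)`. -/
noncomputable def lap {V : Type*} (b : V → V → ℝ) (m : V → ℝ) (f : V → ℝ) (x : V) : ℝ :=
  (1 / m x) * ∑' y, b x y * (f x - f y)

/-- The weighted degree `Deg(x) = (1/m x) ∑_y b x y`. -/
noncomputable def deg {V : Type*} (b : V → V → ℝ) (m : V → ℝ) (x : V) : ℝ :=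
  (1 / m x) * ∑' y, b x y

/-- Uniformity of the Feller property: for a heat kernel on a connected, locally
finite, countably infinite weighted graph, vanishing at infinity of `p_{t₀}(x₀,·)` for a
single `t₀ > 0`, `x₀` is equivalent to the Feller property (all `t > 0`, all `x`), and to
the uniform Feller property (`sup_{t∈[0,T]} p_t(x,·)` vanishes at infinity for all `T > 0`). -/
theorem stmt0 {X : Type*} [Countable X] [Infinite X]
    (b : X → X → ℝ) (m : X → ℝ) (hwg : IsWeightedGraph b m)
    (p : ℝ → X → X → ℝ)
    (hpos : ∀ t, 0 < t → ∀ x y, 0 < p t x y)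
    (hsymm : ∀ t, 0 ≤ t → ∀ x y, p t x y = p t y x)
    (hsemi : ∀ s, 0 ≤ s → ∀ t, 0 ≤ t → ∀ x y,
      Summable (fun z => p s x z * p t z y * m z) ∧
        p (s + t) x y = ∑' z, p s x z * p t z y * m z)
    (hsub : ∀ t, 0 ≤ t → ∀ x,
      Summable (fun y => p t x y * m y) ∧ ∑' y, p t x y * m y ≤ 1)
    (hdiag : ∀ t, 0 ≤ t → ∀ x, Real.exp (-t * deg b m x) ≤ p t x x * m x)
    (hcont : ∀ x y, ContinuousOn (fun t => p t x y) (Set.Ici (0 : ℝ))) :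
    ((∃ t₀, 0 < t₀ ∧ ∃ x₀, VanishesAtInfty (fun y => p t₀ x₀ y)) ↔
      (∀ t, 0 < t → ∀ x, VanishesAtInfty (fun y => p t x y))) ∧
    ((∀ t, 0 < t → ∀ x, VanishesAtInfty (fun y => p t x y)) ↔
      (∀ T, 0 < T → ∀ x,
        VanishesAtInfty (fun y => sSup ((fun t => p t x y) '' Set.Icc 0 T)))) := by
  obtain ⟨hb0, hbsymm, hbdiag, hfin, hm, hconn⟩ := hwg
  -- nonnegativity of p for t ≥ 0
  have hnn : ∀ t, 0 ≤ t → ∀ x y, 0 ≤ p t x y := by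
    intro t ht x y
    rcases ht.lt_or_eq with h | h
    · exact (hpos t h x y).le
    · subst h
      have hc : ContinuousWithinAt (fun t => p t x y) (Set.Ici (0 : ℝ)) 0 :=
        (hcont x y) 0 (by simp)
      have h1 : Tendsto (fun t => p t x y) (𝓝[Set.Ioi (0:ℝ)] 0) (𝓝 (p 0 x y)) :=
        hc.tendsto.mono_left (nhdsWithin_mono _ Set.Ioi_subset_Ici_self)
      exact ge_of_tendsto h1 (by
        filter_upwards [self_mem_nhdsWithin] with t ht
        exact (hpos t ht x y).le)
  -- nonnegativity of deg
  have hdeg : ∀ x, 0 ≤ deg b m x := by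
    intro x
    have : (0:ℝ) ≤ ∑' y, b x y := tsum_nonneg (fun y => hb0 x y)
    have hmx := hm x
    unfold deg
    positivity
  -- key monotonicity estimate : p t x y ≤ exp (T * deg x) * p T x y for 0 ≤ t ≤ T
  have hmono : ∀ x y t T, 0 ≤ t → t ≤ T →
      p t x y ≤ Real.exp (T * deg b m x) * p T x y := by
    intro x y t T ht htT
    have hs : (0:ℝ) ≤ T - t := by linarith
    obtain ⟨hsum, heq⟩ := hsemi (T - t) hs t ht x y
    have hT : p T x y = ∑' z, p (T - t) x z * p t z y * m z := by
      rw [show T - t + t = T from by ring] at heq; exact heq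
    have hterm : p (T - t) x x * p t x y * m x ≤ p T x y := by
      rw [hT]
      exact Summable.le_tsum hsum x (fun z _ =>
        mul_nonneg (mul_nonneg (hnn _ hs _ _) (hnn _ ht _ _)) (hm z).le)
    have hd := hdiag (T - t) hs x
    have hq : 0 ≤ p t x y := hnn t ht x y
    have h1 : Real.exp (-(T - t) * deg b m x) * p t x y ≤ p T x y := by
      calc Real.exp (-(T - t) * deg b m x) * p t x y
          ≤ (p (T - t) x x * m x) * p t x y := mul_le_mul_of_nonneg_right hd hq
        _ = p (T - t) x x * p t x y * m x := by ring
        _ ≤ p T x y := hterm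
    have h2 : p t x y ≤ Real.exp ((T - t) * deg b m x) * p T x y := by
      rw [neg_mul, Real.exp_neg] at h1
      rwa [← inv_mul_le_iff₀ (Real.exp_pos _)]
    refine h2.trans (mul_le_mul_of_nonneg_right ?_ (hnn T (ht.trans htT) x y))
    exact Real.exp_le_exp.mpr (by nlinarith [hdeg x])
  -- domination lemma for VanishesAtInfty
  have hdom : ∀ (f g : X → ℝ) (c : ℝ), 0 < c → (∀ y, 0 ≤ f y) → (∀ y, f y ≤ c * g y) →
      VanishesAtInfty g → VanishesAtInfty f := by
    intro f g c hc hf hle hg ε hε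
    refine (hg (ε / c) (by positivity)).subset ?_
    intro y hy
    simp only [Set.mem_setOf_eq] at *
    have h1 : ε ≤ f y := by
      have := abs_of_nonneg (hf y); linarith [hy, this.symm ▸ hy]
    have h2 : ε / c ≤ g y := by
      rw [div_le_iff₀ hc] at *
      nlinarith [hle y]
    exact h2.trans (le_abs_self _)
  -- doubling lemma
  have dbl : ∀ s, 0 < s → (∀ x, VanishesAtInfty (fun y => p s x y)) →
      ∀ x, VanishesAtInfty (fun y => p (s + s) x y) := by
    intro s hs hall x ε hε
    have hδ : (0:ℝ) < ε / 3 := by positivity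
    have hF : {z | ε / 3 ≤ |p s x z|}.Finite := hall x (ε/3) hδ
    set Fs : Finset X := hF.toFinset with hFs
    have hsub2 : {y | ε ≤ |p (s+s) x y|} ⊆ ⋃ z ∈ Fs, {y | ε / 3 ≤ |p s z y|} := by
      intro y hy
      by_contra hnot
      simp only [Set.mem_iUnion, Set.mem_setOf_eq, not_exists, not_le] at hnot
      -- all z ∈ Fs : |p s z y| < ε/3
      obtain ⟨hsum, heq⟩ := hsemi s hs.le s hs.le x y
      have htail : ∑' (z : ↑((↑Fs : Set X)ᶜ)), p s x ↑z * p s (↑z) y * m ↑z ≤ ε / 3 := by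
        have hsy : Summable (fun z => p s z y * m z) := by
          have := (hsub s hs.le y).1
          refine this.congr (fun z => ?_)
          rw [hsymm s hs.le y z]
        have hcmp : ∀ z : ↑((↑Fs : Set X)ᶜ), p s x ↑z * p s (↑z) y * m ↑z ≤
            (ε/3) * (p s (↑z) y * m ↑z) := by
          intro ⟨z, hz⟩
          have hz' : z ∉ Fs := by simpa using hz
          have hzlt : |p s x z| < ε / 3 := by
            by_contra hcon
            exact hz' (by simpa [hFs] using (not_lt.mp hcon))
          have : p s x z < ε / 3 := (le_abs_self _).trans_lt hzlt
          have h1 : 0 ≤ p s z y * m z := mul_nonneg (hnn s hs.le z y) (hm z).le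
          calc p s x z * p s z y * m z = p s x z * (p s z y * m z) := by ring
            _ ≤ (ε/3) * (p s z y * m z) := mul_le_mul_of_nonneg_right this.le h1
        have hsumtail : Summable (fun z : ↑((↑Fs : Set X)ᶜ) => p s x ↑z * p s (↑z) y * m ↑z) :=
          hsum.subtype _
        have hsumtail2 : Summable (fun z : ↑((↑Fs : Set X)ᶜ) => (ε/3) * (p s (↑z) y * m ↑z)) :=
          (hsy.subtype _).mul_left _
        refine (Summable.tsum_le_tsum hcmp hsumtail hsumtail2).trans ?_
        rw [tsum_mul_left]
        have h2 : ∑' (z : ↑((↑Fs : Set X)ᶜ)), p s (↑z) y * m ↑z ≤ ∑' z, p s z y * m z :=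
          Summable.tsum_le_tsum_of_inj Subtype.val Subtype.val_injective
            (fun z _ => mul_nonneg (hnn s hs.le z y) (hm z).le)
            (fun z => le_rfl) (hsy.subtype _) hsy
        have h3 : ∑' z, p s z y * m z ≤ 1 := by
          have := (hsub s hs.le y).2
          calc ∑' z, p s z y * m z = ∑' z, p s y z * m z := by
                congr 1; ext z; rw [hsymm s hs.le z y]
            _ ≤ 1 := this
        nlinarith
      have hmain : ∑ z ∈ Fs, p s x z * p s z y * m z ≤ ε / 3 := by
        have h1 : ∀ z ∈ Fs, p s x z * p s z y * m z ≤ (ε/3) * (p s x z * m z) := by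
          intro z hz
          have hzy : p s z y < ε / 3 := (le_abs_self _).trans_lt (hnot z hz)
          have h0 : 0 ≤ p s x z * m z := mul_nonneg (hnn s hs.le x z) (hm z).le
          nlinarith [hnn s hs.le x z, (hm z).le, hnn s hs.le z y]
        calc ∑ z ∈ Fs, p s x z * p s z y * m z
            ≤ ∑ z ∈ Fs, (ε/3) * (p s x z * m z) := Finset.sum_le_sum h1
          _ = (ε/3) * ∑ z ∈ Fs, p s x z * m z := by rw [Finset.mul_sum]
          _ ≤ (ε/3) * 1 := by
              refine mul_le_mul_of_nonneg_left ?_ hδ.le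
              refine (Summable.sum_le_tsum Fs (fun z _ =>
                mul_nonneg (hnn s hs.le x z) (hm z).le) (hsub s hs.le x).1).trans
                (hsub s hs.le x).2
          _ = ε / 3 := mul_one _
      have hsplit := Summable.sum_add_tsum_compl (s := Fs) hsum
      have : p (s + s) x y ≤ 2 * (ε / 3) := by
        rw [heq, ← hsplit]
        linarith [htail, hmain]
      have habs : ε ≤ p (s+s) x y := by
        have := hy
        simp only [Set.mem_setOf_eq] at this
        rwa [abs_of_nonneg (hnn _ (by linarith) x y)] at this
      linarith
    refine (Set.Finite.biUnion Fs.finite_toSet (fun z _ => hall z (ε/3) hδ)).subset hsub2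
  -- main direction (i) → (ii)
  have main : (∃ t₀, 0 < t₀ ∧ ∃ x₀, VanishesAtInfty (fun y => p t₀ x₀ y)) →
      ∀ t, 0 < t → ∀ x, VanishesAtInfty (fun y => p t x y) := by
    rintro ⟨t₀, ht₀, x₀, hv⟩
    -- step 1 : all t in (0, t₀)
    have step1 : ∀ t, 0 < t → t < t₀ → ∀ x, VanishesAtInfty (fun y => p t x y) := by
      intro t ht htt x
      have hs : (0:ℝ) < t₀ - t := by linarith
      have hc : 0 < p (t₀ - t) x₀ x * m x := mul_pos (hpos _ hs _ _) (hm x)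
      refine hdom _ _ (1 / (p (t₀ - t) x₀ x * m x)) (by positivity)
        (fun y => hnn t ht.le x y) (fun y => ?_) hv
      obtain ⟨hsum, heq⟩ := hsemi (t₀ - t) hs.le t ht.le x₀ y
      have hT : p t₀ x₀ y = ∑' z, p (t₀ - t) x₀ z * p t z y * m z := by
        rw [show t₀ - t + t = t₀ from by ring] at heq; exact heq
      have hterm : p (t₀ - t) x₀ x * p t x y * m x ≤ p t₀ x₀ y := by
        rw [hT]
        exact Summable.le_tsum hsum x (fun z _ =>
          mul_nonneg (mul_nonneg (hnn _ hs.le _ _) (hnn _ ht.le _ _)) (hm z).le)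
      rw [div_mul_eq_mul_div, one_mul, le_div_iff₀ hc]
      nlinarith
    -- induction to all times
    have step2 : ∀ n : ℕ, ∀ t, 0 < t → t < 2 ^ n * t₀ →
        ∀ x, VanishesAtInfty (fun y => p t x y) := by
      intro n
      induction n with
      | zero => intro t ht h2 x; exact step1 t ht (by simpa using h2) x
      | succ n ih =>
        intro t ht h2 x
        by_cases hcase : t < 2 ^ n * t₀
        · exact ih t ht hcase x
        · push_neg at hcase
          have hth : 0 < t / 2 := by linarith
          have hth2 : t / 2 < 2 ^ n * t₀ := by
            have : (2:ℝ) ^ (n+1) = 2 * 2 ^ n := by ring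
            rw [this] at h2; linarith
          have hv2 := dbl (t/2) hth (fun x' => ih (t/2) hth hth2 x')
          have heq : t / 2 + t / 2 = t := by ring
          have := hv2 x
          rwa [heq] at this
    intro t ht x
    obtain ⟨n, hn⟩ := pow_unbounded_of_one_lt (t / t₀) (by norm_num : (1:ℝ) < 2)
    refine step2 n t ht ?_ x
    rw [div_lt_iff₀ ht₀] at hn
    linarith
  have hne : Nonempty X := inferInstance
  obtain ⟨x₀⟩ := hne
  constructor
  · exact ⟨main, fun h => ⟨1, one_pos, x₀, h 1 one_pos x₀⟩⟩
  · constructor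
    · -- (ii) → (iii)
      intro h T hT x
      set C := Real.exp (T * deg b m x) with hC
      have hCpos : 0 < C := Real.exp_pos _
      refine hdom _ _ C hCpos ?_ ?_ (h T hT x)
      · -- sSup nonneg
        intro y
        have hmem : p T x y ∈ (fun t => p t x y) '' Set.Icc 0 T :=
          ⟨T, Set.right_mem_Icc.mpr hT.le, rfl⟩
        have hbdd : BddAbove ((fun t => p t x y) '' Set.Icc 0 T) := by
          refine ⟨C * p T x y, ?_⟩
          rintro a ⟨t, ⟨ht0, htT⟩, rfl⟩
          exact hmono x y t T ht0 htT
        exact (hnn T hT.le x y).trans (le_csSup hbdd hmem)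
      · intro y
        refine Real.sSup_le ?_ (mul_nonneg hCpos.le (hnn T hT.le x y))
        rintro a ⟨t, ⟨ht0, htT⟩, rfl⟩
        exact hmono x y t T ht0 htT
    · -- (iii) → (ii)
      intro h t ht x
      refine hdom _ _ 1 one_pos (fun y => hnn t ht.le x y) (fun y => ?_) (h t ht x)
      rw [one_mul]
      have hbdd : BddAbove ((fun s => p s x y) '' Set.Icc 0 t) := by
        refine ⟨Real.exp (t * deg b m x) * p t x y, ?_⟩
        rintro a ⟨s, ⟨hs0, hst⟩, rfl⟩
        exact hmono x y s t hs0 hst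
      have hmem : p t x y ∈ (fun s => p s x y) '' Set.Icc 0 t :=
        ⟨t, Set.right_mem_Icc.mpr ht.le, rfl⟩
      exact le_csSup hbdd hmem
end

section
/- Let (X,b,m) be a connected, locally finite, countably infinite weighted graph, fix x₀∈X, and suppose that ∑_{r=1}^∞ 1/D_-(r) = ∞, where D_-(r) = max_{x∈S_r} Deg_-(x). Then for every λ<0 there exists a function v : X→(0,∞) which vanishes at infinity and satisfies 𝓛v(x) ≥ λ·v(x) for every x∈X. (By the elliptic characterization of the Feller property, this means the graph satisfies the Feller property.) -/
/-- The combinatorial graph metric: the least length of a path of edges joining `x` to `y`. -/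
noncomputable def graphDist {V : Type*} (b : V → V → ℝ) (x y : V) : ℕ :=
  sInf {n | ∃ f : ℕ → V, f 0 = x ∧ f n = y ∧ ∀ i < n, 0 < b (f i) (f (i + 1))}

/-- The sphere `S_r = {x | d(x,x₀) = r}` around `x₀`. -/
def sphere' {V : Type*} (b : V → V → ℝ) (x₀ : V) (r : ℕ) : Set V :=
  {x | graphDist b x₀ x = r}

/-- The inner degree `Deg_-(x) = (1/m x) ∑_{y ∈ S_{d(x₀,x)−1}} b x y` of a vertex `x`
(with respect to the centre `x₀`). -/
noncomputable def degMinus {V : Type*} (b : V → V → ℝ) (m : V → ℝ) (x₀ : V) (x : V) : ℝ :=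
  (1 / m x) * ∑' y, (if graphDist b x₀ y + 1 = graphDist b x₀ x then b x y else 0)

/-!
Take the radial function `v x = a (d(x₀, x))` with `a r = ∏_{k<r} (1 + g k)⁻¹` and
`g k = -λ / D_-(k+1)`. Since `a` is decreasing, at `x ∈ S_{r+1}` only the inner neighbours
pull `𝓛v` down, so `𝓛v x ≥ Deg_-(x) (a(r+1) - a r) ≥ D_-(r+1) (a(r+1) - a r) = λ a(r+1)`,
the last equality being the choice of `g`. As `∏ (1 + g k) ≥ 1 + ∑ g k` and `∑ g = ∞`,
`a r → 0`; balls are finite, so `v` vanishes at infinity.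
-/

open Filter Finset Topology

section GraphDist

variable {V : Type*} {b : V → V → ℝ} {x₀ : V}

def pathLengths (b : V → V → ℝ) (x₀ x : V) : Set ℕ :=
  {n | ∃ f : ℕ → V, f 0 = x₀ ∧ f n = x ∧ ∀ i < n, 0 < b (f i) (f (i + 1))}

lemma succ_mem_pathLengths {y z : V} {n : ℕ} (hn : n ∈ pathLengths b x₀ y) (h : 0 < b y z) :
    n + 1 ∈ pathLengths b x₀ z := by
  obtain ⟨f, h0, hn, hf⟩ := hn
  refine ⟨fun i => if i ≤ n then f i else z, by simp [h0], by simp, fun i hi => ?_⟩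
  rcases (Nat.lt_succ_iff.mp hi).lt_or_eq with hi | rfl
  · simpa [hi.le, Nat.succ_le_of_lt hi] using hf i hi
  · simpa [hn] using h

lemma graphDist_mem_pathLengths {x : V}
    (hx : Relation.ReflTransGen (fun a c => 0 < b a c) x₀ x) :
    graphDist b x₀ x ∈ pathLengths b x₀ x := by
  refine Nat.sInf_mem ?_
  induction hx with
  | refl => exact ⟨0, fun _ => x₀, rfl, rfl, by omega⟩
  | tail _ hedge ih =>
    obtain ⟨n, hn⟩ := ih
    exact ⟨n + 1, succ_mem_pathLengths hn hedge⟩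

lemma graphDist_le_succ_of_pos {y z : V}
    (hy : Relation.ReflTransGen (fun a c => 0 < b a c) x₀ y) (h : 0 < b y z) :
    graphDist b x₀ z ≤ graphDist b x₀ y + 1 :=
  Nat.sInf_le (succ_mem_pathLengths (graphDist_mem_pathLengths hy) h)

lemma eq_of_graphDist_eq_zero {x : V}
    (hx : Relation.ReflTransGen (fun a c => 0 < b a c) x₀ x) (h : graphDist b x₀ x = 0) :
    x = x₀ := by
  obtain ⟨f, h0, hx, -⟩ := h ▸ graphDist_mem_pathLengths hx
  rw [← hx, h0]

lemma exists_pos_graphDist_eq_of_graphDist_eq_succ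
    (hconn : ∀ x, Relation.ReflTransGen (fun a c => 0 < b a c) x₀ x) {x : V} {r : ℕ}
    (h : graphDist b x₀ x = r + 1) : ∃ y, graphDist b x₀ y = r ∧ 0 < b y x := by
  obtain ⟨f, h0, hx, hf⟩ := h ▸ graphDist_mem_pathLengths (hconn x)
  have hedge : 0 < b (f r) x := hx ▸ hf r r.lt_succ_self
  have hle : graphDist b x₀ (f r) ≤ r := Nat.sInf_le ⟨f, h0, rfl, fun i hi => hf i (by omega)⟩
  have hge := graphDist_le_succ_of_pos (hconn (f r)) hedge
  exact ⟨f r, by omega, hedge⟩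

lemma finite_setOf_graphDist_le (hlf : ∀ x, {y | 0 < b x y}.Finite)
    (hconn : ∀ x, Relation.ReflTransGen (fun a c => 0 < b a c) x₀ x) (R : ℕ) :
    {x | graphDist b x₀ x ≤ R}.Finite := by
  induction R with
  | zero =>
    exact (Set.finite_singleton x₀).subset fun x hx =>
      eq_of_graphDist_eq_zero (hconn x) (Nat.le_zero.mp hx)
  | succ R ih =>
    refine (ih.union (ih.biUnion fun y _ => hlf y)).subset fun x hx => ?_
    rcases (show graphDist b x₀ x ≤ R + 1 from hx).lt_or_eq with hlt | heq
    · exact Or.inl (Nat.lt_succ_iff.mp hlt)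
    · obtain ⟨y, hy, hyx⟩ := exists_pos_graphDist_eq_of_graphDist_eq_succ hconn heq
      exact Or.inr (Set.mem_biUnion (show graphDist b x₀ y ≤ R from hy.le) hyx)

end GraphDist

lemma vanishesAtInfty_comp {V : Type*} {φ : V → ℕ} (hφ : ∀ R, {x | φ x ≤ R}.Finite)
    {a : ℕ → ℝ} (ha : Tendsto a atTop (𝓝 0)) : VanishesAtInfty fun x => a (φ x) := by
  intro ε hε
  have habs : Tendsto (fun r => |a r|) atTop (𝓝 0) := by simpa using ha.abs
  obtain ⟨R, hR⟩ := eventually_atTop.mp (habs.eventually (gt_mem_nhds hε))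
  refine (hφ R).subset fun x hx => ?_
  by_contra hgt
  exact (hR (φ x) (not_le.mp hgt).le).not_ge hx

section InnerDegree

variable {V : Type*} {b : V → V → ℝ} {m : V → ℝ} {x₀ x : V}

lemma summable_of_eq_zero_of_weight_eq_zero (hb0 : ∀ y, 0 ≤ b x y)
    (hlf : {y | 0 < b x y}.Finite) {F : V → ℝ} (hF : ∀ y, b x y = 0 → F y = 0) :
    Summable F :=
  summable_of_hasFiniteSupport <| hlf.subset fun y hy => (hb0 y).lt_of_ne' fun h => hy (hF y h)

lemma degMinus_pos (hb0 : ∀ y, 0 ≤ b x y) (hsym : ∀ y, b y x = b x y)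
    (hlf : {y | 0 < b x y}.Finite) (hm : 0 < m x)
    (hconn : ∀ x, Relation.ReflTransGen (fun a c => 0 < b a c) x₀ x)
    (hx : graphDist b x₀ x ≠ 0) : 0 < degMinus b m x₀ x := by
  obtain ⟨r, hr⟩ := Nat.exists_eq_succ_of_ne_zero hx
  obtain ⟨y, hy, hyx⟩ := exists_pos_graphDist_eq_of_graphDist_eq_succ hconn hr
  refine mul_pos (one_div_pos.mpr hm) (Summable.tsum_pos ?_ (fun z => ?_) y ?_)
  · exact summable_of_eq_zero_of_weight_eq_zero hb0 hlf fun z hz => by simp [hz]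
  · split_ifs
    exacts [hb0 z, le_rfl]
  · rw [if_pos (by omega), ← hsym]
    exact hyx

/-- At `x = x₀` the truncated `0 - 1 = 0` makes the left-hand side vanish. -/
lemma degMinus_mul_sub_le_lap (hb0 : ∀ y, 0 ≤ b x y) (hsym : ∀ y, b y x = b x y)
    (hlf : {y | 0 < b x y}.Finite) (hm : 0 ≤ m x)
    (hconn : ∀ x, Relation.ReflTransGen (fun a c => 0 < b a c) x₀ x)
    {a : ℕ → ℝ} (ha : Antitone a) :
    degMinus b m x₀ x * (a (graphDist b x₀ x) - a (graphDist b x₀ x - 1)) ≤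
      lap b m (fun y => a (graphDist b x₀ y)) x := by
  unfold degMinus lap
  rw [mul_assoc, ← tsum_mul_right]
  refine mul_le_mul_of_nonneg_left (Summable.tsum_le_tsum (fun y => ?_) ?_ ?_) (by positivity)
  · by_cases hy : graphDist b x₀ y + 1 = graphDist b x₀ x
    · rw [if_pos hy, show graphDist b x₀ x - 1 = graphDist b x₀ y by omega]
    · rw [if_neg hy, zero_mul]
      rcases (hb0 y).eq_or_lt with h | h
      · rw [← h, zero_mul]
      · have := graphDist_le_succ_of_pos (hconn y) (hsym y ▸ h)
        exact mul_nonneg h.le (sub_nonneg.mpr (ha (by omega)))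
  · exact summable_of_eq_zero_of_weight_eq_zero hb0 hlf fun y hy => by simp [hy]
  · exact summable_of_eq_zero_of_weight_eq_zero hb0 hlf fun y hy => by simp [hy]

end InnerDegree

section InvProdOneAdd

variable {g : ℕ → ℝ}

noncomputable def invProdOneAdd (g : ℕ → ℝ) (r : ℕ) : ℝ :=
  (∏ k ∈ range r, (1 + g k))⁻¹

lemma one_add_sum_le_prod_one_add (hg : ∀ k, 0 ≤ g k) (r : ℕ) :
    1 + ∑ k ∈ range r, g k ≤ ∏ k ∈ range r, (1 + g k) := by
  induction r with
  | zero => simp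
  | succ r ih =>
    have hS : 0 ≤ ∑ k ∈ range r, g k := sum_nonneg fun k _ => hg k
    rw [sum_range_succ, prod_range_succ]
    nlinarith [hg r]

lemma invProdOneAdd_pos (hg : ∀ k, 0 ≤ g k) (r : ℕ) : 0 < invProdOneAdd g r :=
  inv_pos.mpr (prod_pos fun k _ => by linarith [hg k])

lemma invProdOneAdd_sub_succ (hg : ∀ k, 0 ≤ g k) (r : ℕ) :
    invProdOneAdd g r - invProdOneAdd g (r + 1) = g r * invProdOneAdd g (r + 1) := by
  have h1 : 1 + g r ≠ 0 := by linarith [hg r]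
  simp only [invProdOneAdd, prod_range_succ, mul_inv]
  field_simp
  ring

lemma invProdOneAdd_antitone (hg : ∀ k, 0 ≤ g k) : Antitone (invProdOneAdd g) :=
  antitone_nat_of_succ_le fun r => by
    have := invProdOneAdd_sub_succ hg r
    nlinarith [hg r, invProdOneAdd_pos hg (r + 1)]

lemma tendsto_invProdOneAdd_zero (hg : ∀ k, 0 ≤ g k) (hns : ¬ Summable g) :
    Tendsto (invProdOneAdd g) atTop (𝓝 0) := by
  have hsum : Tendsto (fun r => ∑ k ∈ range r, g k) atTop atTop :=
    (not_summable_iff_tendsto_nat_atTop_of_nonneg hg).mp hns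
  exact tendsto_inv_atTop_zero.comp <| tendsto_atTop_mono (one_add_sum_le_prod_one_add hg)
    (tendsto_atTop_add_const_left _ 1 hsum)

end InvProdOneAdd

theorem stmt1_general {V : Type*}
    (b : V → V → ℝ) (m : V → ℝ) (hwg : IsWeightedGraph b m) (x₀ : V)
    (D : ℕ → ℝ)
    (hD : ∀ r : ℕ, 1 ≤ r →
      IsGreatest (degMinus b m x₀ '' sphere' b x₀ r) (D r))
    (hdiv : ¬ Summable (fun r : ℕ => 1 / D (r + 1))) :
    ∀ lam : ℝ, lam < 0 → ∃ v : V → ℝ,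
      (∀ x, 0 < v x) ∧ VanishesAtInfty v ∧ ∀ x, lam * v x ≤ lap b m v x := by
  obtain ⟨hb0, hsym, -, hlf, hm, hconn⟩ := hwg
  intro lam hlam
  have hDpos (r : ℕ) : 0 < D (r + 1) := by
    obtain ⟨x, hx, hxD⟩ := (hD (r + 1) r.succ_pos).1
    rw [← hxD]
    exact degMinus_pos (hb0 x) (hsym · x) (hlf x) (hm x) (hconn x₀) (by rw [hx]; omega)
  set g : ℕ → ℝ := fun k => -lam * (1 / D (k + 1))
  have hg (k : ℕ) : 0 ≤ g k := mul_nonneg (by linarith) (one_div_pos.mpr (hDpos k)).le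
  set a := invProdOneAdd g
  refine ⟨fun x => a (graphDist b x₀ x), fun x => invProdOneAdd_pos hg _,
    vanishesAtInfty_comp (finite_setOf_graphDist_le hlf (hconn x₀))
      (tendsto_invProdOneAdd_zero hg ((summable_mul_left_iff (by linarith)).not.mpr hdiv)),
    fun x => le_trans ?_ (degMinus_mul_sub_le_lap (hb0 x) (hsym · x) (hlf x) (hm x).le
      (hconn x₀) (invProdOneAdd_antitone hg))⟩
  dsimp only
  rcases hr : graphDist b x₀ x with _ | r
  · simpa using mul_nonpos_of_nonpos_of_nonneg hlam.le (invProdOneAdd_pos hg 0).le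
  · have hDx : degMinus b m x₀ x ≤ D (r + 1) := (hD (r + 1) r.succ_pos).2 ⟨x, hr, rfl⟩
    calc lam * a (r + 1) = D (r + 1) * (a (r + 1) - a r) := by
          rw [← neg_sub, invProdOneAdd_sub_succ hg]
          simp only [a, g]
          field_simp [(hDpos r).ne']
      _ ≤ degMinus b m x₀ x * (a (r + 1) - a r) :=
          mul_le_mul_of_nonpos_right hDx (sub_nonpos.mpr (invProdOneAdd_antitone hg r.le_succ))
      _ = degMinus b m x₀ x * (a (r + 1) - a (r + 1 - 1)) := rfl

/-- Theorem (Feller property via inner degree growth): if `D_-(r) = max_{x ∈ S_r} Deg_-(x)`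
satisfies `∑_{r≥1} 1/D_-(r) = ∞`, then for every `λ < 0` there is a positive function `v`
vanishing at infinity with `𝓛v ≥ λ·v`; i.e. the graph satisfies the Feller property. -/
theorem stmt1 {V : Type*} [Countable V] [Infinite V]
    (b : V → V → ℝ) (m : V → ℝ) (hwg : IsWeightedGraph b m) (x₀ : V)
    (D : ℕ → ℝ)
    (hD : ∀ r : ℕ, 1 ≤ r →
      IsGreatest (degMinus b m x₀ '' sphere' b x₀ r) (D r))
    (hdiv : ¬ Summable (fun r : ℕ => 1 / D (r + 1))) :
    ∀ lam : ℝ, lam < 0 → ∃ v : V → ℝ,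
      (∀ x, 0 < v x) ∧ VanishesAtInfty v ∧ ∀ x, lam * v x ≤ lap b m v x :=
  stmt1_general b m hwg x₀ D hD hdiv
end

section
/- Let (X,b,m) be a connected, locally finite, countably infinite weighted graph, fix x₀∈X, and suppose that ∑_{r=1}^∞ (D(r)−d_-(r)+1)/d_-(r) < ∞, where D(r)=max_{x∈S_r} Deg(x) and d_-(r)=min_{x∈S_r} Deg_-(x). Then for every λ<0, every function v : X→(0,∞) satisfying 𝓛v(x) ≥ λ·v(x) for all x∈X fails to vanish at infinity. (By the elliptic characterization of the Feller property, this means the graph does not satisfy the Feller property.) -/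
section Aux
variable {V : Type*} {b : V → V → ℝ} {x₀ : V}

lemma pathSet_nonempty {x y : V}
    (h : Relation.ReflTransGen (fun a c => 0 < b a c) x y) :
    {n : ℕ | ∃ f : ℕ → V, f 0 = x ∧ f n = y ∧ ∀ i < n, 0 < b (f i) (f (i + 1))}.Nonempty := by
  induction h with
  | refl => exact ⟨0, fun _ => x, rfl, rfl, fun i hi => absurd hi (Nat.not_lt_zero i)⟩
  | @tail c d hxc hcd ih =>
    obtain ⟨n, f, hf0, hfn, hstep⟩ := ih
    refine ⟨n + 1, fun i => if i ≤ n then f i else d, by simp [hf0], by simp, ?_⟩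
    intro i hi
    rcases lt_or_eq_of_le (Nat.lt_succ_iff.mp hi) with h1 | h1
    · simpa [Nat.le_of_lt h1, Nat.succ_le_of_lt h1] using hstep i h1
    · subst h1
      simpa [Nat.not_succ_le_self, hfn] using hcd

lemma graphDist_mem (hconn : ∀ x y, Relation.ReflTransGen (fun a c => 0 < b a c) x y) (x : V) :
    graphDist b x₀ x ∈ {n : ℕ | ∃ f : ℕ → V, f 0 = x₀ ∧ f n = x ∧ ∀ i < n, 0 < b (f i) (f (i + 1))} :=
  Nat.sInf_mem (pathSet_nonempty (hconn x₀ x))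

lemma graphDist_self : graphDist b x₀ x₀ = 0 :=
  Nat.eq_zero_of_le_zero
    (Nat.sInf_le ⟨fun _ => x₀, rfl, rfl, fun i hi => absurd hi (Nat.not_lt_zero i)⟩)

lemma graphDist_trunc {n : ℕ} {f : ℕ → V} (hf0 : f 0 = x₀)
    (hstep : ∀ i < n, 0 < b (f i) (f (i + 1))) {k : ℕ} (hk : k ≤ n) :
    graphDist b x₀ (f k) ≤ k :=
  Nat.sInf_le ⟨f, hf0, rfl, fun i hi => hstep i (lt_of_lt_of_le hi hk)⟩

lemma graphDist_step (hconn : ∀ x y, Relation.ReflTransGen (fun a c => 0 < b a c) x y)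
    {x y : V} (hxy : 0 < b x y) :
    graphDist b x₀ y ≤ graphDist b x₀ x + 1 := by
  obtain ⟨f, hf0, hfn, hstep⟩ := graphDist_mem (x₀ := x₀) hconn x
  set n := graphDist b x₀ x with hn
  refine Nat.sInf_le ⟨fun i => if i ≤ n then f i else y, by simp [hf0], by simp, ?_⟩
  intro i hi
  rcases lt_or_eq_of_le (Nat.lt_succ_iff.mp hi) with h1 | h1
  · simpa [Nat.le_of_lt h1, Nat.succ_le_of_lt h1] using hstep i h1
  · subst h1
    simpa [Nat.not_succ_le_self, hfn] using hxy

lemma exists_pred (hconn : ∀ x y, Relation.ReflTransGen (fun a c => 0 < b a c) x y)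
    (hsym : ∀ x y, b x y = b y x) {x : V} {r : ℕ} (hx : graphDist b x₀ x = r + 1) :
    ∃ y, 0 < b x y ∧ graphDist b x₀ y = r := by
  obtain ⟨f, hf0, hfn, hstep⟩ := graphDist_mem (x₀ := x₀) hconn x
  rw [hx] at hfn hstep
  have hedge : 0 < b (f r) x := by
    have := hstep r (Nat.lt_succ_self r)
    rwa [hfn] at this
  have hle : graphDist b x₀ (f r) ≤ r :=
    graphDist_trunc hf0 hstep (Nat.le_succ r)
  have hge : graphDist b x₀ x ≤ graphDist b x₀ (f r) + 1 := graphDist_step hconn hedge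
  refine ⟨f r, by rwa [hsym x (f r)], by omega⟩

end Aux

/-- Theorem (failure of the Feller property): if `D(r) = max_{x ∈ S_r} Deg(x)` and
`d_-(r) = min_{x ∈ S_r} Deg_-(x)` satisfy `∑_{r≥1} (D(r) − d_-(r) + 1)/d_-(r) < ∞`,
then for every `λ < 0` no positive function `v` with `𝓛v ≥ λ·v` vanishes at infinity;
i.e. the graph does not satisfy the Feller property. -/
theorem stmt2 {V : Type*} [Countable V] [Infinite V]
    (b : V → V → ℝ) (m : V → ℝ) (hwg : IsWeightedGraph b m) (x₀ : V)
    (D dm : ℕ → ℝ)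
    (hD : ∀ r : ℕ, 1 ≤ r → IsGreatest (deg b m '' sphere' b x₀ r) (D r))
    (hdm : ∀ r : ℕ, 1 ≤ r → IsLeast (degMinus b m x₀ '' sphere' b x₀ r) (dm r))
    (hsum : Summable (fun r : ℕ => (D (r + 1) - dm (r + 1) + 1) / dm (r + 1))) :
    ∀ lam : ℝ, lam < 0 → ∀ v : V → ℝ,
      (∀ x, 0 < v x) → (∀ x, lam * v x ≤ lap b m v x) → ¬ VanishesAtInfty v := by
  obtain ⟨hb0, hsym, hdiag, hfin, hm, hconn⟩ := hwg
  intro lam hlam v hv hlap hvan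
  -- tsum reduction
  have htsum : ∀ (x : V) (g : V → ℝ), (∀ y, b x y = 0 → g y = 0) →
      ∑' y, g y = ∑ y ∈ (hfin x).toFinset, g y := by
    intro x g hg
    refine tsum_eq_sum ?_
    intro y hy
    refine hg y (le_antisymm (not_lt.mp ?_) (hb0 x y))
    simpa using hy
  have hdeg_eq : ∀ x : V, deg b m x = (1 / m x) * ∑ y ∈ (hfin x).toFinset, b x y := by
    intro x; rw [deg, htsum x _ (fun y h => h)]
  have hdegm_eq : ∀ x : V, degMinus b m x₀ x =
      (1 / m x) * ∑ y ∈ (hfin x).toFinset,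
        (if graphDist b x₀ y + 1 = graphDist b x₀ x then b x y else 0) := by
    intro x
    rw [degMinus, htsum x _ (fun y h => by split <;> simp [h])]
  have hlap_eq : ∀ x : V, lap b m v x =
      (1 / m x) * ∑ y ∈ (hfin x).toFinset, b x y * (v x - v y) := by
    intro x
    rw [lap, htsum x _ (fun y h => by rw [h, zero_mul])]
  -- nonemptiness of spheres
  have hsne : ∀ r : ℕ, (sphere' b x₀ r).Nonempty := by
    intro r
    match r with
    | 0 => exact ⟨x₀, graphDist_self⟩
    | (r + 1) =>
      obtain ⟨x, hx, -⟩ := (hD (r + 1) (by omega)).1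
      exact ⟨x, hx⟩
  -- spheres finite
  have hsfin : ∀ r : ℕ, (sphere' b x₀ r).Finite := by
    intro r
    induction r with
    | zero =>
      refine (Set.finite_singleton x₀).subset ?_
      intro x hx
      have hmem := graphDist_mem (x₀ := x₀) hconn x
      rw [show graphDist b x₀ x = 0 from hx] at hmem
      obtain ⟨f, hf0, hfn, -⟩ := hmem
      simp only [Set.mem_singleton_iff]
      rw [← hfn, hf0]
    | succ r ih =>
      refine (ih.biUnion (fun y _ => hfin y)).subset ?_
      intro x hx
      obtain ⟨y, hxy, hyd⟩ := exists_pred hconn hsym hx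
      exact Set.mem_biUnion hyd (by rw [Set.mem_setOf_eq, ← hsym]; exact hxy)
  -- choose minimizers
  have hmin : ∀ r : ℕ, ∃ z ∈ sphere' b x₀ r, ∀ w ∈ sphere' b x₀ r, v z ≤ v w := by
    intro r
    exact Set.exists_min_image _ v (hsfin r) (hsne r)
  choose xm hxm hxmin using hmin
  -- positivity of dm, D bounds
  have hdmpos : ∀ r : ℕ, 0 < dm (r + 1) := by
    intro r
    obtain ⟨x', hx', he⟩ := (hdm (r + 1) (by omega)).1
    obtain ⟨y, hxy, hyd⟩ := exists_pred hconn hsym hx'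
    rw [← he, hdegm_eq]
    have hymem : y ∈ (hfin x').toFinset := by simpa using hxy
    have hsumpos : 0 < ∑ z ∈ (hfin x').toFinset,
        (if graphDist b x₀ z + 1 = graphDist b x₀ x' then b x' z else 0) := by
      have hcond : graphDist b x₀ y + 1 = graphDist b x₀ x' := by
        rw [hyd, show graphDist b x₀ x' = r + 1 from hx']
      have hterm : (if graphDist b x₀ y + 1 = graphDist b x₀ x' then b x' y else 0) = b x' y :=
        if_pos hcond
      calc (0 : ℝ) < b x' y := hxy
        _ = _ := hterm.symm
        _ ≤ _ := by
            have hnn : ∀ z ∈ (hfin x').toFinset,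
                0 ≤ (if graphDist b x₀ z + 1 = graphDist b x₀ x' then b x' z else 0) := by
              intro z _
              split
              · exact hb0 x' z
              · exact le_rfl
            exact Finset.single_le_sum hnn hymem
    exact mul_pos (one_div_pos.mpr (hm x')) hsumpos
  have hdmD : ∀ r : ℕ, dm (r + 1) ≤ D (r + 1) := by
    intro r
    obtain ⟨x', hx', he⟩ := (hdm (r + 1) (by omega)).1
    have h1 : degMinus b m x₀ x' ≤ deg b m x' := by
      rw [hdegm_eq, hdeg_eq]
      have : 0 < 1 / m x' := one_div_pos.mpr (hm x')
      refine mul_le_mul_of_nonneg_left ?_ this.le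
      refine Finset.sum_le_sum (fun z _ => ?_)
      split
      · exact le_rfl
      · exact hb0 x' z
    have h2 : deg b m x' ≤ D (r + 1) := (hD (r + 1) (by omega)).2 ⟨x', hx', rfl⟩
    rw [← he]; linarith
  have hDlam : ∀ r : ℕ, 0 < D (r + 1) - lam := by
    intro r; have := hdmpos r; have := hdmD r; linarith
  -- key recursion
  have hkey : ∀ r : ℕ, dm (r + 1) * v (xm r) ≤ (D (r + 1) - lam) * v (xm (r + 1)) := by
    intro r
    set x := xm (r + 1) with hxdef
    have hxS : x ∈ sphere' b x₀ (r + 1) := hxm (r + 1)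
    have hdx : graphDist b x₀ x = r + 1 := hxS
    have h1 : lam * v x ≤ lap b m v x := hlap x
    rw [hlap_eq] at h1
    have hpt : ∀ y ∈ (hfin x).toFinset, b x y * (v x - v y) ≤
        b x y * v x -
          (if graphDist b x₀ y + 1 = graphDist b x₀ x then b x y else 0) * v (xm r) := by
      intro y hy
      by_cases hc : graphDist b x₀ y + 1 = graphDist b x₀ x
      · rw [if_pos hc]
        have hyS : y ∈ sphere' b x₀ r := by
          have : graphDist b x₀ y + 1 = r + 1 := by rw [hc, hdx]
          exact Nat.succ_injective this
        have hvy : v (xm r) ≤ v y := hxmin r y hyS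
        have hb := hb0 x y
        nlinarith
      · rw [if_neg hc]
        have hb := hb0 x y
        have hvy := (hv y).le
        nlinarith
    have hT : ∑ y ∈ (hfin x).toFinset, b x y * (v x - v y) ≤
        (∑ y ∈ (hfin x).toFinset, b x y) * v x -
        (∑ y ∈ (hfin x).toFinset,
          (if graphDist b x₀ y + 1 = graphDist b x₀ x then b x y else 0)) * v (xm r) := by
      calc ∑ y ∈ (hfin x).toFinset, b x y * (v x - v y)
          ≤ ∑ y ∈ (hfin x).toFinset, (b x y * v x -
            (if graphDist b x₀ y + 1 = graphDist b x₀ x then b x y else 0) * v (xm r)) :=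
            Finset.sum_le_sum hpt
        _ = _ := by rw [Finset.sum_sub_distrib, ← Finset.sum_mul, ← Finset.sum_mul]
    have hmx : 0 < 1 / m x := one_div_pos.mpr (hm x)
    have h2 : lam * v x ≤ deg b m x * v x - degMinus b m x₀ x * v (xm r) := by
      have h3 := mul_le_mul_of_nonneg_left hT hmx.le
      rw [hdeg_eq, hdegm_eq]
      calc lam * v x ≤ _ := h1
        _ ≤ _ := h3
        _ = _ := by ring
    have hdegub : deg b m x ≤ D (r + 1) := (hD (r + 1) (by omega)).2 ⟨x, hxS, rfl⟩
    have hdegmlb : dm (r + 1) ≤ degMinus b m x₀ x := (hdm (r + 1) (by omega)).2 ⟨x, hxS, rfl⟩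
    have hur := (hv (xm r)).le
    have hur1 := (hv (xm (r + 1))).le
    calc dm (r + 1) * v (xm r) ≤ degMinus b m x₀ x * v (xm r) :=
          mul_le_mul_of_nonneg_right hdegmlb hur
      _ ≤ (deg b m x - lam) * v x := by linarith
      _ ≤ (D (r + 1) - lam) * v x := mul_le_mul_of_nonneg_right (by linarith) hur1
  -- product lower bound
  have hprod : ∀ r : ℕ,
      v (xm 0) * ∏ s ∈ Finset.range r, (dm (s + 1) / (D (s + 1) - lam)) ≤ v (xm r) := by
    intro r
    induction r with
    | zero => simp
    | succ r ih =>
      rw [Finset.prod_range_succ, ← mul_assoc]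
      have hrat : 0 ≤ dm (r + 1) / (D (r + 1) - lam) :=
        div_nonneg (hdmpos r).le (hDlam r).le
      calc v (xm 0) * (∏ s ∈ Finset.range r, (dm (s + 1) / (D (s + 1) - lam))) *
            (dm (r + 1) / (D (r + 1) - lam))
          ≤ v (xm r) * (dm (r + 1) / (D (r + 1) - lam)) :=
            mul_le_mul_of_nonneg_right ih hrat
        _ ≤ v (xm (r + 1)) := by
            rw [mul_div_assoc', div_le_iff₀ (hDlam r)]
            calc v (xm r) * dm (r + 1) = dm (r + 1) * v (xm r) := by ring
              _ ≤ (D (r + 1) - lam) * v (xm (r + 1)) := hkey r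
              _ = v (xm (r + 1)) * (D (r + 1) - lam) := by ring
  -- summability of logs
  set g : ℕ → ℝ := fun s => Real.log ((D (s + 1) - lam) / dm (s + 1)) with hg
  have hratpos : ∀ s : ℕ, 0 < (D (s + 1) - lam) / dm (s + 1) :=
    fun s => div_pos (hDlam s) (hdmpos s)
  have hg0 : ∀ s : ℕ, 0 ≤ g s := by
    intro s
    refine Real.log_nonneg ((one_le_div (hdmpos s)).mpr ?_)
    have := hdmD s; linarith
  have hinv : Summable (fun s : ℕ => 1 / dm (s + 1)) := by
    refine Summable.of_nonneg_of_le (fun s => (one_div_pos.mpr (hdmpos s)).le) (fun s => ?_) hsum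
    rw [div_le_div_iff₀ (hdmpos s) (hdmpos s)]
    nlinarith [hdmD s, hdmpos s]
  have hgle : ∀ s : ℕ, g s ≤ (D (s + 1) - dm (s + 1) + 1) / dm (s + 1) +
      (-lam - 1) * (1 / dm (s + 1)) := by
    intro s
    have h1 : g s ≤ (D (s + 1) - lam) / dm (s + 1) - 1 :=
      Real.log_le_sub_one_of_pos (hratpos s)
    have h2 : (D (s + 1) - lam) / dm (s + 1) - 1 =
        (D (s + 1) - dm (s + 1) + 1) / dm (s + 1) + (-lam - 1) * (1 / dm (s + 1)) := by
      have hone : dm (s + 1) * (1 / dm (s + 1)) = 1 := by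
        rw [mul_one_div, div_self (hdmpos s).ne']
      rw [div_eq_mul_one_div (D (s + 1) - lam) (dm (s + 1)),
        div_eq_mul_one_div (D (s + 1) - dm (s + 1) + 1) (dm (s + 1))]
      linear_combination hone
    linarith
  have hgsum : Summable g :=
    Summable.of_nonneg_of_le hg0 hgle (hsum.add (hinv.mul_left _))
  set T : ℝ := ∑' s, g s with hT
  have hpartial : ∀ r : ℕ, ∑ s ∈ Finset.range r, g s ≤ T :=
    fun r => Summable.sum_le_tsum _ (fun i _ => hg0 i) hgsum
  have hprod_exp : ∀ r : ℕ,
      Real.exp (-T) ≤ ∏ s ∈ Finset.range r, (dm (s + 1) / (D (s + 1) - lam)) := by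
    intro r
    have hfac : ∀ s : ℕ, dm (s + 1) / (D (s + 1) - lam) = Real.exp (-(g s)) := by
      intro s
      rw [hg]
      rw [← Real.log_inv, inv_div, Real.exp_log (div_pos (hdmpos s) (hDlam s))]
    calc Real.exp (-T) ≤ Real.exp (-(∑ s ∈ Finset.range r, g s)) :=
          Real.exp_le_exp.mpr (neg_le_neg (hpartial r))
      _ = ∏ s ∈ Finset.range r, Real.exp (-(g s)) := by
          rw [← Real.exp_sum]; rw [Finset.sum_neg_distrib]
      _ = _ := by
          exact Finset.prod_congr rfl (fun s _ => (hfac s).symm)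
  -- the constant
  set c : ℝ := v (xm 0) * Real.exp (-T) with hc
  have hcpos : 0 < c := mul_pos (hv (xm 0)) (Real.exp_pos _)
  have hcu : ∀ r : ℕ, c ≤ v (xm r) := by
    intro r
    calc c ≤ v (xm 0) * ∏ s ∈ Finset.range r, (dm (s + 1) / (D (s + 1) - lam)) :=
          mul_le_mul_of_nonneg_left (hprod_exp r) (hv (xm 0)).le
      _ ≤ v (xm r) := hprod r
  -- contradiction
  have hF := hvan c hcpos
  have hsub : Set.range xm ⊆ {x | c ≤ |v x|} := by
    rintro _ ⟨r, rfl⟩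
    show c ≤ |v (xm r)|
    rw [abs_of_pos (hv _)]
    exact hcu r
  have hinj : Function.Injective xm := by
    intro r s h
    have h1 : graphDist b x₀ (xm r) = r := hxm r
    have h2 : graphDist b x₀ (xm s) = s := hxm s
    rw [h] at h1
    omega
  exact Set.infinite_range_of_injective hinj (hF.subset hsub)
end

section
/- For every sequence (k_r)_{r≥1} of real numbers there exists a weighted graph on X=ℕ₀ with b(x,y)>0 if and only if |x−y|=1 and a measure m : ℕ₀→(0,∞) such that, writing d_+(r)=b(r,r+1)/m(r) and d_-(r)=b(r−1,r)/m(r) for r≥1 with d_-(0)=0: (a) d_+(r)=1 for all r≥0 and ∑_{r=1}^∞ 1/d_-(r) < ∞ (so that ∑_r (D(r)−d_-(r)+1)/d_-(r) < ∞ and hence the graph does not satisfy the Feller property); (b) the curvature κ(r) := (d_+(r−1)−d_-(r−1)) − (d_+(r)−d_-(r)) satisfies κ(r) ≥ k_r for all r≥1; and (c) the Bakry–Émery curvature bound holds at every r≥1, i.e. Γ₂(f,f)(r) ≥ k_r·Γ₁(f,f)(r) for every f : ℕ₀→ℝ. -/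
/-- On the path graph `ℕ₀`: `d_+(r) = b(r,r+1)/m(r)`. -/
noncomputable def dplus (b : ℕ → ℕ → ℝ) (m : ℕ → ℝ) (r : ℕ) : ℝ :=
  b r (r + 1) / m r

/-- On the path graph `ℕ₀`: `d_-(r) = b(r−1,r)/m(r)` for `r ≥ 1`, with `d_-(0) = 0`. -/
noncomputable def dminus (b : ℕ → ℕ → ℝ) (m : ℕ → ℝ) (r : ℕ) : ℝ :=
  if r = 0 then 0 else b (r - 1) r / m r

/-- The Ollivier-Ricci curvature of the edge `{r−1, r}`:
`κ(r) = (d_+(r−1) − d_-(r−1)) − (d_+(r) − d_-(r))`. -/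
noncomputable def kappa (b : ℕ → ℕ → ℝ) (m : ℕ → ℝ) (r : ℕ) : ℝ :=
  (dplus b m (r - 1) - dminus b m (r - 1)) - (dplus b m r - dminus b m r)

/-- The iterated carré du champ operators: `Γ₀(f,g) = f·g` and
`Γ_k(f,g) = −𝓛Γ_{k−1}(f,g) + Γ_{k−1}(𝓛f,g) + Γ_{k−1}(f,𝓛g)` for `k ≥ 1`. -/
noncomputable def Gam (b : ℕ → ℕ → ℝ) (m : ℕ → ℝ) :
    ℕ → (ℕ → ℝ) → (ℕ → ℝ) → (ℕ → ℝ)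
  | 0, f, g => fun x => f x * g x
  | (k + 1), f, g => fun x =>
      -(lap b m (Gam b m k f g) x) + Gam b m k (lap b m f) g x +
        Gam b m k f (lap b m g) x

/-!
Take `d_+ ≡ 1` and `d_- = c` for a sequence `c` with `c₀ = 0`, `c_r − c_{r−1} ≥ k_r` and
`c_{r+1} ≥ 2 c_r + 1`; with `b(r, r+1) = m(r)` this forces `m(r) = c_{r+1} m(r+1)`. The doubling makes
`∑ 1/c_r` converge, and the Ollivier curvature is `κ(r) = c_r − c_{r−1} ≥ k_r`. At `r ≥ 1`,
`Γ₂(f,f) − k_r Γ₁(f,f)` is a quadratic form in the two gradients and the two second differences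
of `f` at `r`, and the two growth conditions on `c` make it a sum of squares.
-/

def pathWeight (w : ℕ → ℝ) (x y : ℕ) : ℝ :=
  if y = x + 1 then w x else if x = y + 1 then w y else 0

section PathGraph

variable {w : ℕ → ℝ}

lemma pathWeight_nonneg (hw : ∀ n, 0 ≤ w n) (x y : ℕ) : 0 ≤ pathWeight w x y := by
  unfold pathWeight
  split_ifs
  exacts [hw x, hw y, le_rfl]

lemma pathWeight_comm (x y : ℕ) : pathWeight w x y = pathWeight w y x := by
  unfold pathWeight
  split_ifs <;> first | rfl | omega

lemma pathWeight_pos_iff (hw : ∀ n, 0 < w n) (x y : ℕ) :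
    0 < pathWeight w x y ↔ y = x + 1 ∨ x = y + 1 := by
  unfold pathWeight
  split_ifs with h₁ h₂
  · simp [h₁, hw]
  · simp [h₂, hw]
  · simp [h₁, h₂]

variable (w) (m : ℕ → ℝ)

lemma dplus_pathWeight (r : ℕ) : dplus (pathWeight w) m r = w r / m r := by
  simp [dplus, pathWeight]

lemma dminus_pathWeight_succ (r : ℕ) : dminus (pathWeight w) m (r + 1) = w r / m (r + 1) := by
  simp [dminus, pathWeight]

lemma lap_pathWeight (f : ℕ → ℝ) (r : ℕ) :
    lap (pathWeight w) m f r =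
      dplus (pathWeight w) m r * (f r - f (r + 1)) +
        dminus (pathWeight w) m r * (f r - f (r - 1)) := by
  have hsupp : ∀ y ∉ ({r - 1, r + 1} : Finset ℕ), pathWeight w r y * (f r - f y) = 0 := by
    intro y hy
    simp only [Finset.mem_insert, Finset.mem_singleton, not_or] at hy
    simp [pathWeight, hy.2, show r ≠ y + 1 by omega]
  rw [lap, tsum_eq_sum hsupp, Finset.sum_pair (by omega)]
  cases r with
  | zero => simp [dplus, dminus, pathWeight]; ring
  | succ n => simp [dplus, dminus, pathWeight, show n ≠ n + 1 + 1 by omega]; ring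

lemma gam_one_pathWeight (f g : ℕ → ℝ) (r : ℕ) :
    Gam (pathWeight w) m 1 f g r =
      dplus (pathWeight w) m r * ((f r - f (r + 1)) * (g r - g (r + 1))) +
        dminus (pathWeight w) m r * ((f r - f (r - 1)) * (g r - g (r - 1))) := by
  simp only [Gam, lap_pathWeight]
  ring

lemma gam_two_pathWeight (hplus : ∀ r, dplus (pathWeight w) m r = 1) (f : ℕ → ℝ) (r : ℕ) :
    let c := dminus (pathWeight w) m
    Gam (pathWeight w) m 2 f f (r + 1) =
      (f (r + 1) - 2 * f (r + 2) + f (r + 3)) ^ 2 +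
        c r * c (r + 1) * (f (r - 1) - 2 * f r + f (r + 1)) ^ 2 +
        (3 * c (r + 2) - c (r + 1)) * (f (r + 1) - f (r + 2)) ^ 2 +
        4 * c (r + 1) * (f (r + 1) - f (r + 2)) * (f (r + 1) - f r) +
        c (r + 1) * (c (r + 1) + 2 - c r) * (f (r + 1) - f r) ^ 2 := by
  simp only [Gam, lap_pathWeight, hplus, Nat.add_sub_cancel]
  ring

lemma kappa_succ_of_dplus_eq_one (hplus : ∀ r, dplus (pathWeight w) m r = 1) (r : ℕ) :
    kappa (pathWeight w) m (r + 1) =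
      dminus (pathWeight w) m (r + 1) - dminus (pathWeight w) m r := by
  rw [kappa, hplus, hplus, Nat.add_sub_cancel]
  ring

end PathGraph

/-- `K Γ₁ ≤ Γ₂` at `r` when `d_+ ≡ 1`, in terms of `x = ∇⁺f(r)`, `y = ∇⁻f(r)`, the second
differences `u`, `v` and `c₀, c₁, c₂ = d_-(r−1), d_-(r), d_-(r+1)`. -/
lemma mul_gam_one_le_gam_two_of_path_coeffs {K c₀ c₁ c₂ : ℝ} (hc₀ : 0 ≤ c₀) (hc₁ : 0 ≤ c₁)
    (hK : K ≤ c₁ - c₀) (hc₂ : 2 * c₁ ≤ c₂) (u v x y : ℝ) :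
    K * (x ^ 2 + c₁ * y ^ 2) ≤
      u ^ 2 + c₀ * c₁ * v ^ 2 + (3 * c₂ - c₁) * x ^ 2 + 4 * c₁ * x * y +
        c₁ * (c₁ + 2 - c₀) * y ^ 2 := by
  nlinarith [sq_nonneg u, mul_nonneg (mul_nonneg hc₀ hc₁) (sq_nonneg v),
    mul_nonneg hc₁ (sq_nonneg (2 * x + y)),
    mul_nonneg (by linarith : 0 ≤ 3 * c₂ - 5 * c₁ - K) (sq_nonneg x),
    mul_nonneg (mul_nonneg hc₁ (by linarith : 0 ≤ c₁ + 1 - c₀ - K)) (sq_nonneg y)]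

lemma mul_gam_one_le_gam_two_pathWeight {w m : ℕ → ℝ}
    (hplus : ∀ r, dplus (pathWeight w) m r = 1) {K : ℝ} {r : ℕ}
    (hc₀ : 0 ≤ dminus (pathWeight w) m r) (hc₁ : 0 ≤ dminus (pathWeight w) m (r + 1))
    (hK : K ≤ kappa (pathWeight w) m (r + 1))
    (hc₂ : 2 * dminus (pathWeight w) m (r + 1) ≤ dminus (pathWeight w) m (r + 2))
    (f : ℕ → ℝ) :
    K * Gam (pathWeight w) m 1 f f (r + 1) ≤ Gam (pathWeight w) m 2 f f (r + 1) := by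
  rw [kappa_succ_of_dplus_eq_one w m hplus] at hK
  rw [gam_one_pathWeight, gam_two_pathWeight w m hplus, hplus, Nat.add_sub_cancel]
  convert mul_gam_one_le_gam_two_of_path_coeffs hc₀ hc₁ hK hc₂ _ _ (f (r + 1) - f (r + 2))
    (f (r + 1) - f r) using 2
  ring

noncomputable def dminusSeq (k : ℕ → ℝ) : ℕ → ℝ
  | 0 => 0
  | n + 1 => 2 * dminusSeq k n + |k (n + 1)| + 1

/-- With edge weights `b(n, n+1) = m(n)` this gives `d_+ ≡ 1` and `d_- = dminusSeq k`. -/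
noncomputable def measureSeq (k : ℕ → ℝ) : ℕ → ℝ
  | 0 => 1
  | n + 1 => measureSeq k n / dminusSeq k (n + 1)

section Construction

variable (k : ℕ → ℝ)

lemma dminusSeq_nonneg (n : ℕ) : 0 ≤ dminusSeq k n := by
  induction n with
  | zero => rfl
  | succ n ih => simp only [dminusSeq]; positivity

lemma add_le_dminusSeq_succ (n : ℕ) : dminusSeq k n + k (n + 1) ≤ dminusSeq k (n + 1) := by
  simp only [dminusSeq]
  linarith [dminusSeq_nonneg k n, le_abs_self (k (n + 1))]

lemma two_mul_le_dminusSeq_succ (n : ℕ) : 2 * dminusSeq k n ≤ dminusSeq k (n + 1) := by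
  simp only [dminusSeq]
  linarith [abs_nonneg (k (n + 1))]

lemma two_pow_le_dminusSeq_succ (n : ℕ) : (2 : ℝ) ^ n ≤ dminusSeq k (n + 1) := by
  induction n with
  | zero => simp only [dminusSeq]; linarith [dminusSeq_nonneg k 0, abs_nonneg (k 1)]
  | succ n ih => rw [pow_succ]; linarith [two_mul_le_dminusSeq_succ k (n + 1)]

lemma measureSeq_pos (n : ℕ) : 0 < measureSeq k n := by
  induction n with
  | zero => exact one_pos
  | succ n ih =>
    have := (two_pow_le_dminusSeq_succ k n).trans_lt' (by positivity)
    simp only [measureSeq]; positivity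

lemma dplus_measureSeq (r : ℕ) : dplus (pathWeight (measureSeq k)) (measureSeq k) r = 1 := by
  rw [dplus_pathWeight, div_self (measureSeq_pos k r).ne']

lemma dminus_measureSeq (r : ℕ) :
    dminus (pathWeight (measureSeq k)) (measureSeq k) r = dminusSeq k r := by
  cases r with
  | zero => simp [dminus, dminusSeq]
  | succ n =>
    have := (measureSeq_pos k n).ne'
    have := (two_pow_le_dminusSeq_succ k n).trans_lt' (by positivity)
    rw [dminus_pathWeight_succ, measureSeq]
    field_simp

lemma summable_one_div_dminusSeq_succ : Summable fun n => 1 / dminusSeq k (n + 1) := by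
  refine summable_geometric_two.of_nonneg_of_le (fun n => ?_) (fun n => ?_)
  · exact one_div_nonneg.mpr (dminusSeq_nonneg k _)
  · rw [one_div_pow]
    exact one_div_le_one_div_of_le (by positivity) (two_pow_le_dminusSeq_succ k n)

end Construction

/-- For every sequence `(k_r)` of reals there is a weighted graph on `ℕ₀` (a weighted
half-line) with `d_+ ≡ 1` and `∑ 1/d_-(r) < ∞` (hence not Feller) whose Ollivier-Ricci
curvature satisfies `κ(r) ≥ k_r` and whose Bakry–Émery curvature satisfies
`Γ₂(f,f)(r) ≥ k_r·Γ₁(f,f)(r)` for all `f` and all `r ≥ 1`. -/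
theorem stmt4 (k : ℕ → ℝ) :
    ∃ (b : ℕ → ℕ → ℝ) (m : ℕ → ℝ),
      (∀ x y, 0 ≤ b x y) ∧ (∀ x y, b x y = b y x) ∧
      (∀ x y, 0 < b x y ↔ (y = x + 1 ∨ x = y + 1)) ∧
      (∀ x, 0 < m x) ∧
      (∀ r : ℕ, dplus b m r = 1) ∧
      Summable (fun r : ℕ => 1 / dminus b m (r + 1)) ∧
      (∀ r : ℕ, 1 ≤ r → k r ≤ kappa b m r) ∧
      (∀ (f : ℕ → ℝ) (r : ℕ), 1 ≤ r →
        k r * Gam b m 1 f f r ≤ Gam b m 2 f f r) := by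
  have hplus := dplus_measureSeq k
  have hkappa (n : ℕ) : k (n + 1) ≤ kappa (pathWeight (measureSeq k)) (measureSeq k) (n + 1) := by
    rw [kappa_succ_of_dplus_eq_one _ _ hplus, dminus_measureSeq, dminus_measureSeq]
    linarith [add_le_dminusSeq_succ k n]
  refine ⟨pathWeight (measureSeq k), measureSeq k,
    pathWeight_nonneg fun n => (measureSeq_pos k n).le, pathWeight_comm,
    pathWeight_pos_iff (measureSeq_pos k), measureSeq_pos k, hplus, ?_, ?_, ?_⟩
  · simpa only [dminus_measureSeq] using summable_one_div_dminusSeq_succ k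
  · rintro r hr
    obtain ⟨n, rfl⟩ := Nat.exists_eq_add_of_le' hr
    exact hkappa n
  · rintro f r hr
    obtain ⟨n, rfl⟩ := Nat.exists_eq_add_of_le' hr
    refine mul_gam_one_le_gam_two_pathWeight hplus ?_ ?_ (hkappa n) ?_ f <;>
      simp only [dminus_measureSeq]
    exacts [dminusSeq_nonneg k n, dminusSeq_nonneg k _, two_mul_le_dminusSeq_succ k _]
end

section
/- For all real numbers j>0, t>0 and r>0 one has (1/j²)·( j·r·arsinh(j·r/t) − √(t² + (j·r)²) + t ) ≥ (r/j)·( log(j·r/t) − 1 ). Moreover, for any C∈ℝ, if in addition 0 < t ≤ j·e^{−(C+2)}, then (1/j²)·( j·r·arsinh(j·r/t) − √(t² + (j·r)²) + t ) ≥ (r/j)·( log r + C + 1 ). -/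
/- `log x ≤ arsinh x = log (x + √(x² + 1))` and `√(t² + a²) ≤ t + a` bound the
bracket in `ζ_j(t,r)` below by `a (log (a/t) - 1)` with `a = j r`. The hypothesis
`t ≤ j e^{-(C+2)}` means `log (j r / t) ≥ log r + C + 2`. -/

/-- The exponent in the Davies–Gaffney–Grigor'yan heat kernel estimate:
`ζ_j(t,r) = (1/j²)·( j·r·arsinh(j·r/t) − √(t²+(j·r)²) + t )`. -/
noncomputable def zeta (j t r : ℝ) : ℝ :=
  (1 / j ^ 2) * (j * r * Real.arsinh (j * r / t) - Real.sqrt (t ^ 2 + (j * r) ^ 2) + t)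

open Real

lemma Real.log_le_arsinh {x : ℝ} (hx : 0 < x) : log x ≤ arsinh x :=
  log_le_log hx (le_add_of_nonneg_right (sqrt_nonneg _))

lemma Real.sqrt_sq_add_sq_le_add {a b : ℝ} (ha : 0 ≤ a) (hb : 0 ≤ b) :
    √(a ^ 2 + b ^ 2) ≤ a + b :=
  sqrt_le_iff.mpr ⟨add_nonneg ha hb, by nlinarith⟩

lemma mul_log_div_sub_one_le {a t : ℝ} (ha : 0 < a) (ht : 0 < t) :
    a * (log (a / t) - 1) ≤ a * arsinh (a / t) - √(t ^ 2 + a ^ 2) + t := by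
  have hlog : a * log (a / t) ≤ a * arsinh (a / t) :=
    mul_le_mul_of_nonneg_left (log_le_arsinh (div_pos ha ht)) ha.le
  linarith [sqrt_sq_add_sq_le_add ht.le ha.le]

lemma div_mul_log_div_sub_one_le_zeta {j t r : ℝ} (hj : 0 < j) (ht : 0 < t) (hr : 0 < r) :
    (r / j) * (log (j * r / t) - 1) ≤ zeta j t r := by
  have hscale : (r / j) * (log (j * r / t) - 1) = (1 / j ^ 2) * (j * r * (log (j * r / t) - 1)) := by
    field_simp
  rw [hscale, zeta]
  gcongr
  exact mul_log_div_sub_one_le (mul_pos hj hr) ht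

lemma log_add_le_log_mul_div {j t r c : ℝ} (hr : 0 < r) (ht : 0 < t)
    (htj : t ≤ j * exp (-c)) : log r + c ≤ log (j * r / t) := by
  have hj : 0 < j := pos_of_mul_pos_left (ht.trans_le htj) (exp_pos _).le
  rw [le_log_iff_exp_le (by positivity), exp_add, exp_log hr, le_div_iff₀ ht]
  have htc : t * exp c ≤ j := by
    simpa [exp_neg, ← div_eq_mul_inv, le_div_iff₀ (exp_pos c)] using htj
  nlinarith

theorem stmt5 :
    (∀ j t r : ℝ, 0 < j → 0 < t → 0 < r →
      (r / j) * (Real.log (j * r / t) - 1) ≤ zeta j t r) ∧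
    (∀ j t r C : ℝ, 0 < j → 0 < r → 0 < t → t ≤ j * Real.exp (-(C + 2)) →
      (r / j) * (Real.log r + C + 1) ≤ zeta j t r) := by
  refine ⟨fun j t r hj ht hr => div_mul_log_div_sub_one_le_zeta hj ht hr, ?_⟩
  intro j t r C hj hr ht htj
  have hlog := log_add_le_log_mul_div hr ht htj
  calc (r / j) * (log r + C + 1) ≤ (r / j) * (log (j * r / t) - 1) := by
        gcongr
        linarith
    _ ≤ zeta j t r := div_mul_log_div_sub_one_le_zeta hj ht hr
end

section
/- Let (X,b,m) be a connected, locally finite, countably infinite weighted graph. Let ρ be a metric on X which is intrinsic (∑_y b(x,y)·ρ(x,y)² ≤ m(x) for all x), has jump size at most j>0 (ρ(x,y)≤j whenever b(x,y)>0), and is proper (every ρ-ball is a finite set). Let p : (0,∞)×X×X→[0,∞) satisfy the bound p_t(x,y) ≤ (m(x)·m(y))^{−1/2}·exp(−ζ_j(t,ρ(x,y))) for all t>0 and x,y∈X, where ζ_j(t,r)=(1/j²)·( j·r·arsinh(j·r/t) − √(t²+(j·r)²) + t ). If there exist x₀∈X and C>0 such that −log m(y) ≤ (2·ρ(x₀,y)/j)·(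 log ρ(x₀,y) + C ) for all y∈X with ρ(x₀,y) ≥ 1, then there exists t₀>0 such that for every t∈(0,t₀) the function p_t(x₀,·) vanishes at infinity. -/
lemma log_le_arsinh {s : ℝ} (hs : 0 < s) : Real.log s ≤ Real.arsinh s := by
  rw [Real.arsinh]
  exact Real.log_le_log hs (le_add_of_nonneg_right (Real.sqrt_nonneg _))

lemma zeta_lb {j t r : ℝ} (hj : 0 < j) (ht : 0 < t) (hr : 0 < r) :
    (r / j) * (Real.log j + Real.log r - Real.log t - 1) ≤ zeta j t r := by
  have hjr : 0 < j * r := mul_pos hj hr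
  have h1 : Real.log j + Real.log r - Real.log t ≤ Real.arsinh (j * r / t) := by
    have := log_le_arsinh (div_pos hjr ht)
    rw [Real.log_div (ne_of_gt hjr) (ne_of_gt ht), Real.log_mul (ne_of_gt hj) (ne_of_gt hr)] at this
    linarith
  have h2 : Real.sqrt (t ^ 2 + (j * r) ^ 2) ≤ t + j * r := by
    rw [show t + j * r = Real.sqrt ((t + j * r) ^ 2) from
      (Real.sqrt_sq (by positivity)).symm]
    apply Real.sqrt_le_sqrt
    nlinarith
  rw [zeta]
  have hj2 : (0:ℝ) < 1 / j ^ 2 := by positivity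
  have key : (j * r) * (Real.log j + Real.log r - Real.log t) - (t + j * r) + t ≤
      j * r * Real.arsinh (j * r / t) - Real.sqrt (t ^ 2 + (j * r) ^ 2) + t := by
    have := mul_le_mul_of_nonneg_left h1 (le_of_lt hjr)
    linarith
  calc (r / j) * (Real.log j + Real.log r - Real.log t - 1)
      = (1 / j ^ 2) * ((j * r) * (Real.log j + Real.log r - Real.log t) - (t + j * r) + t) := by
        field_simp; ring
    _ ≤ _ := by
        exact mul_le_mul_of_nonneg_left key (le_of_lt hj2)

/-- Theorem (intrinsic metric criterion for the Feller property): if `ρ` is a proper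
intrinsic metric of jump size at most `j`, the kernel `p` satisfies the
Davies–Gaffney–Grigor'yan bound, and `−log m(y) ≤ (2ρ(x₀,y)/j)(log ρ(x₀,y) + C)` for all
`y` with `ρ(x₀,y) ≥ 1`, then for all sufficiently small `t > 0` the function `p_t(x₀,·)`
vanishes at infinity. -/
theorem stmt6 {X : Type*} [Countable X] [Infinite X]
    (b : X → X → ℝ) (m : X → ℝ) (hwg : IsWeightedGraph b m)
    (ρ : X → X → ℝ) (j : ℝ) (hj : 0 < j)
    (hρnn : ∀ x y, 0 ≤ ρ x y)
    (hρsymm : ∀ x y, ρ x y = ρ y x)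
    (hρeq : ∀ x y, ρ x y = 0 ↔ x = y)
    (hρtri : ∀ x y z, ρ x z ≤ ρ x y + ρ y z)
    (hintr : ∀ x, ∑' y, b x y * ρ x y ^ 2 ≤ m x)
    (hjump : ∀ x y, 0 < b x y → ρ x y ≤ j)
    (hproper : ∀ (x : X) (r : ℝ), {y | ρ x y ≤ r}.Finite)
    (p : ℝ → X → X → ℝ)
    (hpnn : ∀ t, 0 < t → ∀ x y, 0 ≤ p t x y)
    (hbound : ∀ t, 0 < t → ∀ x y,
      p t x y ≤ (m x * m y) ^ (-(1 : ℝ) / 2) * Real.exp (-(zeta j t (ρ x y))))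
    (x₀ : X) (C : ℝ) (hC : 0 < C)
    (hmgrowth : ∀ y, 1 ≤ ρ x₀ y →
      -Real.log (m y) ≤ (2 * ρ x₀ y / j) * (Real.log (ρ x₀ y) + C)) :
    ∃ t₀ > (0 : ℝ), ∀ t, 0 < t → t < t₀ → VanishesAtInfty (fun y => p t x₀ y) := by
  classical
  obtain ⟨hbnn, hbsymm, hbdiag, hbfin, hm, hconn⟩ := hwg
  set K : ℝ := (m x₀) ^ (-(1:ℝ)/2) with hKdef
  have hKpos : 0 < K := Real.rpow_pos_of_pos (hm x₀) _
  refine ⟨j * Real.exp (-(2 + C)), by positivity, ?_⟩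
  intro t ht htlt ε hε
  have hlogt : Real.log t < Real.log j - (2 + C) := by
    have := Real.log_lt_log ht htlt
    rwa [Real.log_mul (ne_of_gt hj) (Real.exp_ne_zero _), Real.log_exp] at this
  -- key pointwise bound for r ≥ 1
  have key : ∀ y, 1 ≤ ρ x₀ y → p t x₀ y ≤ K * Real.exp (-(ρ x₀ y / j)) := by
    intro y hr1
    set r := ρ x₀ y with hrdef
    have hr0 : 0 < r := lt_of_lt_of_le one_pos hr1
    have hζ := zeta_lb hj ht hr0
    have hsplit : (m x₀ * m y) ^ (-(1:ℝ)/2) = K * (m y) ^ (-(1:ℝ)/2) := by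
      rw [hKdef, ← Real.mul_rpow (le_of_lt (hm x₀)) (le_of_lt (hm y))]
    have hmy : (m y) ^ (-(1:ℝ)/2) ≤ Real.exp ((r / j) * (Real.log r + C)) := by
      rw [Real.rpow_def_of_pos (hm y)]
      apply Real.exp_le_exp.mpr
      have h := hmgrowth y hr1
      have : Real.log (m y) * (-(1:ℝ)/2) = (1/2) * (-Real.log (m y)) := by ring
      rw [this]
      calc (1/2) * (-Real.log (m y)) ≤ (1/2) * ((2 * r / j) * (Real.log r + C)) := by
            apply mul_le_mul_of_nonneg_left h (by norm_num)
        _ = (r / j) * (Real.log r + C) := by ring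
    have hexp : (r / j) * (Real.log r + C) - zeta j t r ≤ -(r / j) := by
      have hfac : Real.log j + Real.log r - Real.log t - 1 ≥ Real.log r + C + 1 := by
        linarith
      have hrj : 0 < r / j := div_pos hr0 hj
      have h1 := mul_le_mul_of_nonneg_left hfac (le_of_lt hrj)
      set q := r / j with hq
      have h2 : q * (Real.log r + C + 1) = q * (Real.log r + C) + q := by ring
      linarith
    calc p t x₀ y ≤ (m x₀ * m y) ^ (-(1:ℝ)/2) * Real.exp (-(zeta j t r)) :=
          hbound t ht x₀ y
      _ = K * ((m y) ^ (-(1:ℝ)/2) * Real.exp (-(zeta j t r))) := by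
          rw [hsplit]; ring
      _ ≤ K * (Real.exp ((r / j) * (Real.log r + C)) * Real.exp (-(zeta j t r))) := by
          apply mul_le_mul_of_nonneg_left _ (le_of_lt hKpos)
          exact mul_le_mul_of_nonneg_right hmy (Real.exp_nonneg _)
      _ = K * Real.exp ((r / j) * (Real.log r + C) - zeta j t r) := by
          rw [← Real.exp_add]; ring_nf
      _ ≤ K * Real.exp (-(r / j)) :=
          mul_le_mul_of_nonneg_left (Real.exp_le_exp.mpr hexp) (le_of_lt hKpos)
  -- conclude finiteness
  set R : ℝ := max 1 (j * Real.log (K / ε)) with hRdef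
  apply Set.Finite.subset (hproper x₀ R)
  intro y hy
  simp only [Set.mem_setOf_eq] at hy ⊢
  by_contra hR
  push_neg at hR
  have hr1 : 1 ≤ ρ x₀ y := le_of_lt (lt_of_le_of_lt (le_max_left _ _) hR)
  have hp := key y hr1
  have habs : |p t x₀ y| = p t x₀ y := abs_of_nonneg (hpnn t ht x₀ y)
  rw [habs] at hy
  have hlt : K * Real.exp (-(ρ x₀ y / j)) < ε := by
    have h1 : j * Real.log (K / ε) < ρ x₀ y := lt_of_le_of_lt (le_max_right _ _) hR
    have h2 : Real.log (K / ε) < ρ x₀ y / j := by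
      rw [lt_div_iff₀ hj] at *
      linarith [h1]
    have h3 : Real.exp (-(ρ x₀ y / j)) < ε / K := by
      have : -(ρ x₀ y / j) < Real.log (ε / K) := by
        rw [Real.log_div (ne_of_gt hε) (ne_of_gt hKpos)]
        rw [Real.log_div (ne_of_gt hKpos) (ne_of_gt hε)] at h2
        linarith
      calc Real.exp (-(ρ x₀ y / j)) < Real.exp (Real.log (ε / K)) :=
            Real.exp_lt_exp.mpr this
        _ = ε / K := Real.exp_log (div_pos hε hKpos)
    calc K * Real.exp (-(ρ x₀ y / j)) < K * (ε / K) :=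
          mul_lt_mul_of_pos_left h3 hKpos
      _ = ε := by field_simp
  linarith [hp, hy]
end

section
/- Let (X,b,m) be a connected, locally finite, countably infinite weighted graph and let p : [0,∞)×X×X→[0,∞) satisfy: p₀(x,y)=1_x(y)/m(x); for each x,y the map t↦p_t(x,y) is continuously differentiable with ∂_t p_t(x,y) = −𝓛 p_t(·,y)(x) (Laplacian in the first variable); and ∑_{y∈X} p_t(x,y)·m(y) ≤ 1 for all t≥0, x∈X. Fix T>0 and x∈X and define f_x(y) := 1_x(y)/m(x) + ∫₀^T ( Deg(x)·p_s(x,y) + (1/m(x))·∑_{z∈X} b(x,z)·p_s(z,y) ) ds. Then (1) sup_{t∈[0,T]} p_t(x,y) ≤ f_x(y) for every y∈X, and (2) ∑_{y∈X} f_x(y)·m(y) ≤ 1 + 2·T·Deg(x); in particular f_x ∈ ℓ¹(X,m). -/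
lemma bsum_eq {X : Type*} {b : X → X → ℝ} (hbnn : ∀ x y, 0 ≤ b x y)
    (hfin : ∀ x, {y | 0 < b x y}.Finite) (x : X) (c : X → ℝ) :
    ∑' z, b x z * c z = ∑ z ∈ (hfin x).toFinset, b x z * c z := by
  refine tsum_eq_sum (fun z hz => ?_)
  have : ¬ 0 < b x z := by simpa using hz
  have : b x z = 0 := le_antisymm (not_lt.1 this) (hbnn x z)
  simp [this]

lemma bsum_eq' {X : Type*} {b : X → X → ℝ} (hbnn : ∀ x y, 0 ≤ b x y)
    (hfin : ∀ x, {y | 0 < b x y}.Finite) (x : X) :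
    ∑' z, b x z = ∑ z ∈ (hfin x).toFinset, b x z := by
  refine tsum_eq_sum (fun z hz => ?_)
  have : ¬ 0 < b x z := by simpa using hz
  exact le_antisymm (not_lt.1 this) (hbnn x z)

/-- Uniform `ℓ¹` domination of the heat kernel: with
`f_x(y) = 1_x(y)/m(x) + ∫₀^T ( Deg(x)·p_s(x,y) + (1/m x) ∑_z b x z p_s(z,y) ) ds`
one has `sup_{t∈[0,T]} p_t(x,y) ≤ f_x(y)` and `∑_y f_x(y) m(y) ≤ 1 + 2T·Deg(x)`,
so in particular `f_x ∈ ℓ¹(X,m)`. -/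
theorem stmt8 {X : Type*} [Countable X] [Infinite X] [DecidableEq X]
    (b : X → X → ℝ) (m : X → ℝ) (hwg : IsWeightedGraph b m)
    (p : ℝ → X → X → ℝ)
    (hpnn : ∀ t, 0 ≤ t → ∀ x y, 0 ≤ p t x y)
    (hp0 : ∀ x y, p 0 x y = (if y = x then 1 else 0) / m x)
    (hheat : ∀ x y t, 0 ≤ t →
      HasDerivWithinAt (fun s => p s x y)
        (-(lap b m (fun z => p t z y) x)) (Set.Ici 0) t)
    (hheatcont : ∀ x y,
      ContinuousOn (fun t => lap b m (fun z => p t z y) x) (Set.Ici (0 : ℝ)))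
    (hsub : ∀ t, 0 ≤ t → ∀ x,
      Summable (fun y => p t x y * m y) ∧ ∑' y, p t x y * m y ≤ 1)
    (T : ℝ) (hT : 0 < T) (x : X) (fx : X → ℝ)
    (hfx : fx = fun y => (if y = x then 1 else 0) / m x +
      ∫ s in (0 : ℝ)..T,
        (deg b m x * p s x y + (1 / m x) * ∑' z, b x z * p s z y)) :
    (∀ t ∈ Set.Icc (0 : ℝ) T, ∀ y, p t x y ≤ fx y) ∧
    Summable (fun y => fx y * m y) ∧
    ∑' y, fx y * m y ≤ 1 + 2 * T * deg b m x := by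
  obtain ⟨hbnn, hbsym, hbdiag, hfin, hm, hconn⟩ := hwg
  set g : ℝ → X → ℝ :=
    fun s y => deg b m x * p s x y + (1 / m x) * ∑' z, b x z * p s z y with hg
  have hfxg : ∀ y, fx y = (if y = x then (1:ℝ) else 0) / m x +
      ∫ s in (0:ℝ)..T, g s y := by
    intro y; rw [hfx]
  have hmx : (0:ℝ) < m x := hm x
  have hdegnn : 0 ≤ deg b m x :=
    mul_nonneg (by positivity) (tsum_nonneg fun z => hbnn x z)
  have hdeg_def : deg b m x = (1 / m x) * ∑' z, b x z := rfl
  have hpcont : ∀ x' y', ContinuousOn (fun s => p s x' y') (Set.Ici (0:ℝ)) :=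
    fun x' y' t ht => (hheat x' y' t ht).continuousWithinAt
  have hgcont : ∀ y, ContinuousOn (fun s => g s y) (Set.Ici (0:ℝ)) := by
    intro y
    have h1 : ContinuousOn (fun s => deg b m x * p s x y +
        (1 / m x) * ∑ z ∈ (hfin x).toFinset, b x z * p s z y) (Set.Ici (0:ℝ)) := by
      refine ContinuousOn.add (continuousOn_const.mul (hpcont x y))
        (continuousOn_const.mul ?_)
      exact continuousOn_finset_sum _ fun z _ => continuousOn_const.mul (hpcont z y)
    refine h1.congr fun s _ => ?_
    simp only [hg, bsum_eq hbnn hfin x (fun z => p s z y)]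
  have hgnn : ∀ s, 0 ≤ s → ∀ y, 0 ≤ g s y := by
    intro s hs y
    refine add_nonneg (mul_nonneg hdegnn (hpnn s hs x y)) (mul_nonneg (by positivity)
      (tsum_nonneg fun z => mul_nonneg (hbnn x z) (hpnn s hs z y)))
  have hgint : ∀ y, ∀ t : ℝ, 0 ≤ t → IntervalIntegrable (fun s => g s y)
      MeasureTheory.volume 0 t := by
    intro y t ht
    refine ContinuousOn.intervalIntegrable ?_
    rw [Set.uIcc_of_le ht]
    exact (hgcont y).mono (Set.Icc_subset_Ici_self)
  -- part 1
  have key1 : ∀ t ∈ Set.Icc (0:ℝ) T, ∀ y, p t x y ≤ fx y := by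
    intro t ht y
    have hDint : IntervalIntegrable (fun s => -(lap b m (fun z => p s z y) x))
        MeasureTheory.volume 0 t := by
      refine ContinuousOn.intervalIntegrable ?_
      rw [Set.uIcc_of_le ht.1]
      exact ((hheatcont x y).mono Set.Icc_subset_Ici_self).neg
    have hFTC : ∫ s in (0:ℝ)..t, -(lap b m (fun z => p s z y) x)
        = p t x y - p 0 x y := by
      refine intervalIntegral.integral_eq_sub_of_hasDeriv_right_of_le ht.1
        ((hpcont x y).mono Set.Icc_subset_Ici_self) (fun s hs => ?_) hDint
      exact ((hheat x y s hs.1.le).hasDerivAt (Ici_mem_nhds hs.1)).hasDerivWithinAt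
    have hDle : ∀ s ∈ Set.Icc (0:ℝ) t, -(lap b m (fun z => p s z y) x) ≤ g s y := by
      intro s hs
      have hexp : -(lap b m (fun z => p s z y) x)
          = (1 / m x) * (∑' z, b x z * p s z y) - deg b m x * p s x y := by
        have e0 : lap b m (fun z => p s z y) x
            = (1 / m x) * ∑' z, b x z * (p s x y - p s z y) := rfl
        rw [e0, bsum_eq hbnn hfin x (fun z => p s x y - p s z y),
          bsum_eq hbnn hfin x (fun z => p s z y), hdeg_def, bsum_eq' hbnn hfin x]
        simp only [mul_sub, Finset.sum_sub_distrib]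
        rw [← Finset.sum_mul]
        ring
      rw [hexp]
      have h1 : 0 ≤ deg b m x * p s x y := mul_nonneg hdegnn (hpnn s hs.1 x y)
      simp only [hg]
      linarith
    have h2 : ∫ s in (0:ℝ)..t, -(lap b m (fun z => p s z y) x)
        ≤ ∫ s in (0:ℝ)..t, g s y :=
      intervalIntegral.integral_mono_on ht.1 hDint (hgint y t ht.1) hDle
    have h3 : ∫ s in (0:ℝ)..t, g s y ≤ ∫ s in (0:ℝ)..T, g s y := by
      refine intervalIntegral.integral_mono_interval le_rfl ht.1 ht.2 ?_ (hgint y T hT.le)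
      filter_upwards [MeasureTheory.ae_restrict_mem measurableSet_Ioc] with s hs
      exact hgnn s hs.1.le y
    rw [hfxg y, ← hp0 x y]
    linarith
  refine ⟨key1, ?_⟩
  -- part 2
  have hp0m : ∀ y : X, ((if y = x then (1:ℝ) else 0) / m x) * m y
      = if y = x then 1 else 0 := by
    intro y
    by_cases h : y = x <;> simp [h, hmx.ne']
  have hgmint : ∀ y, IntervalIntegrable (fun s => g s y * m y)
      MeasureTheory.volume 0 T := by
    intro y
    refine ContinuousOn.intervalIntegrable ?_
    rw [Set.uIcc_of_le hT.le]
    exact ((hgcont y).mono Set.Icc_subset_Ici_self).mul continuousOn_const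
  have hIsum : ∀ F : Finset X, ∑ y ∈ F, fx y * m y ≤ 1 + 2 * T * deg b m x := by
    intro F
    have hsplit : ∑ y ∈ F, fx y * m y
        = (∑ y ∈ F, if y = x then (1:ℝ) else 0)
          + ∑ y ∈ F, ∫ s in (0:ℝ)..T, g s y * m y := by
      rw [← Finset.sum_add_distrib]
      refine Finset.sum_congr rfl fun y _ => ?_
      rw [hfxg y, add_mul, hp0m y, intervalIntegral.integral_mul_const]
    have h1 : (∑ y ∈ F, if y = x then (1:ℝ) else 0) ≤ 1 := by
      rw [Finset.sum_ite_eq' F x (fun _ => (1:ℝ))]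
      split_ifs <;> norm_num
    have hswap : ∑ y ∈ F, ∫ s in (0:ℝ)..T, g s y * m y
        = ∫ s in (0:ℝ)..T, ∑ y ∈ F, g s y * m y :=
      (intervalIntegral.integral_finset_sum fun y _ => hgmint y).symm
    have hbound : ∀ s ∈ Set.Icc (0:ℝ) T, ∑ y ∈ F, g s y * m y ≤ 2 * deg b m x := by
      intro s hs
      have hA : ∑ y ∈ F, p s x y * m y ≤ 1 :=
        le_trans (Summable.sum_le_tsum F (fun y _ => mul_nonneg (hpnn s hs.1 x y) (hm y).le)
          (hsub s hs.1 x).1) (hsub s hs.1 x).2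
      have hB : ∑ y ∈ F, (∑' z, b x z * p s z y) * m y ≤ ∑' z, b x z := by
        calc ∑ y ∈ F, (∑' z, b x z * p s z y) * m y
            = ∑ y ∈ F, ∑ z ∈ (hfin x).toFinset, b x z * (p s z y * m y) := by
              refine Finset.sum_congr rfl fun y _ => ?_
              rw [bsum_eq hbnn hfin x (fun z => p s z y), Finset.sum_mul]
              exact Finset.sum_congr rfl fun z _ => by ring
          _ = ∑ z ∈ (hfin x).toFinset, ∑ y ∈ F, b x z * (p s z y * m y) :=
              Finset.sum_comm
          _ = ∑ z ∈ (hfin x).toFinset, b x z * ∑ y ∈ F, p s z y * m y := by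
              refine Finset.sum_congr rfl fun z _ => (Finset.mul_sum _ _ _).symm
          _ ≤ ∑ z ∈ (hfin x).toFinset, b x z * 1 := by
              refine Finset.sum_le_sum fun z _ => mul_le_mul_of_nonneg_left ?_ (hbnn x z)
              exact le_trans (Summable.sum_le_tsum F (fun y _ =>
                mul_nonneg (hpnn s hs.1 z y) (hm y).le) (hsub s hs.1 z).1)
                (hsub s hs.1 z).2
          _ = ∑' z, b x z := by rw [bsum_eq' hbnn hfin x]; simp
      have hE : ∑ y ∈ F, g s y * m y = deg b m x * ∑ y ∈ F, p s x y * m y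
          + (1 / m x) * ∑ y ∈ F, (∑' z, b x z * p s z y) * m y := by
        simp only [hg, add_mul, Finset.sum_add_distrib, Finset.mul_sum]
        congr 1
        · exact Finset.sum_congr rfl fun y _ => by ring
        · exact Finset.sum_congr rfl fun y _ => by ring
      have c1 : deg b m x * ∑ y ∈ F, p s x y * m y ≤ deg b m x :=
        (mul_le_mul_of_nonneg_left hA hdegnn).trans_eq (mul_one _)
      have c2 : (1 / m x) * ∑ y ∈ F, (∑' z, b x z * p s z y) * m y
          ≤ deg b m x := by
        rw [hdeg_def]
        exact mul_le_mul_of_nonneg_left hB (by positivity)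
      rw [hE]; linarith
    have hintF : IntervalIntegrable (fun s => ∑ y ∈ F, g s y * m y)
        MeasureTheory.volume 0 T := by
      refine ContinuousOn.intervalIntegrable ?_
      rw [Set.uIcc_of_le hT.le]
      exact continuousOn_finset_sum _ fun y _ =>
        ((hgcont y).mono Set.Icc_subset_Ici_self).mul continuousOn_const
    have h2 : ∫ s in (0:ℝ)..T, ∑ y ∈ F, g s y * m y
        ≤ ∫ s in (0:ℝ)..T, (2 * deg b m x : ℝ) :=
      intervalIntegral.integral_mono_on hT.le hintF intervalIntegrable_const hbound
    have h3 : ∫ s in (0:ℝ)..T, (2 * deg b m x : ℝ) = 2 * T * deg b m x := by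
      rw [intervalIntegral.integral_const]
      simp [smul_eq_mul]
      ring
    rw [hsplit]
    linarith [hswap ▸ (h3 ▸ h2)]
  have hfxnn : ∀ y, 0 ≤ fx y * m y := by
    intro y
    refine mul_nonneg ?_ (hm y).le
    rw [hfxg y]
    refine add_nonneg (div_nonneg (by split_ifs <;> norm_num) hmx.le)
      (intervalIntegral.integral_nonneg hT.le fun s hs => hgnn s hs.1 y)
  have hsum : Summable (fun y => fx y * m y) :=
    summable_of_sum_le (fun y => hfxnn y) hIsum
  exact ⟨hsum, Summable.tsum_le_of_sum_le hsum hIsum⟩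
end

section
/- Let π : X̃→X, with deck group Γ, be a regular covering of a connected, locally finite, countably infinite weighted graph (X,b,m), with covering graph (X̃,b̃,m̃). Let p̃ : [0,∞)×X̃×X̃→[0,∞) satisfy: p̃₀(x̃,ỹ)=1_{x̃}(ỹ)/m̃(x̃); t↦p̃_t(x̃,ỹ) is continuously differentiable with ∂_t p̃_t(x̃,ỹ) = −𝓛̃ p̃_t(·,ỹ)(x̃); p̃_t(γ(x̃),γ(ỹ))=p̃_t(x̃,ỹ) for all γ∈Γ; ∑_{ỹ} p̃_t(x̃,ỹ)·m̃(ỹ) ≤ 1; and for every x̃∈X̃ and T>0 there exists F∈ℓ¹(X̃,m̃) with sup_{t∈[0,T]} p̃_t(x̃,ỹ) ≤ F(ỹ) for all ỹ. For x,y∈X and x̃∈π⁻¹(x) define q_t(x,y) := ∑_{ỹ∈π⁻¹(y)} p̃_t(x̃,ỹ). Then q_t(x,y) is finite, independent of the choice of x̃∈π⁻¹(x), satisfies q_t(x,y) ≤ 1/m(y), the map t↦q_t(x,y) is differentiable with 𝓛 q_t(·,y)(x) + ∂_t q_t(x,y) = 0 for all t>0 (Laplacian on the base in the first variable), and q₀(x,y)=1_x(y)/m(x)=lim_{t→0⁺}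 q_t(x,y). -/
open Filter Topology

/-- `π : (X̃, b̃, m̃) → (X, b, m)` is a regular covering of weighted graphs with deck
transformation group `Γ`: `π` is surjective, maps the neighbourhood of each `x̃`
bijectively onto the neighbourhood of `π x̃`, the weights and measures are compatible,
every `γ ∈ Γ` is an automorphism over `π`, and `Γ` acts transitively on each fiber. -/
def IsRegularCovering {X Xc : Type*} (b : X → X → ℝ) (m : X → ℝ)
    (bc : Xc → Xc → ℝ) (mc : Xc → ℝ) (π : Xc → X)
    (Γ : Subgroup (Equiv.Perm Xc)) : Prop :=
  Function.Surjective π ∧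
    (∀ xc, Set.BijOn π {yc | 0 < bc xc yc} {y | 0 < b (π xc) y}) ∧
    (∀ xc yc, 0 < bc xc yc → bc xc yc = b (π xc) (π yc)) ∧
    (∀ xc, mc xc = m (π xc)) ∧
    (∀ γ ∈ Γ, ∀ xc, π (γ xc) = π xc) ∧
    (∀ γ ∈ Γ, ∀ xc yc, bc (γ xc) (γ yc) = bc xc yc) ∧
    (∀ xc yc, π xc = π yc → ∃ γ ∈ Γ, γ xc = yc)

/-- If the weight is nonnegative and locally finite at `x`, the Laplacian is a finite sum. -/
lemma lap_eq_finsum {V : Type*} (b : V → V → ℝ) (m : V → ℝ) (f : V → ℝ) (x : V)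
    (hbnn : ∀ z, 0 ≤ b x z) (hfin : {z | 0 < b x z}.Finite) :
    lap b m f x = (1 / m x) * ∑ z ∈ hfin.toFinset, b x z * (f x - f z) := by
  unfold lap
  congr 1
  refine tsum_eq_sum fun z hz => ?_
  have h0 : ¬ 0 < b x z := fun h => hz (hfin.mem_toFinset.2 h)
  rw [le_antisymm (not_lt.1 h0) (hbnn z), zero_mul]

/-- The fiber sums `q_t(x,y) = ∑_{ỹ ∈ π⁻¹(y)} p̃_t(x̃,ỹ)` of the heat kernel of a regular
covering are finite, independent of the choice of `x̃ ∈ π⁻¹(x)`, bounded by `1/m(y)`,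
satisfy the heat equation on the base for `t > 0`, and satisfy the initial condition
`q₀(x,y) = 1_x(y)/m(x) = lim_{t→0⁺} q_t(x,y)`. -/

theorem stmt9 {X Xc : Type*} [Countable X] [Infinite X] [Countable Xc] [DecidableEq X] [DecidableEq Xc]
    (b : X → X → ℝ) (m : X → ℝ) (bc : Xc → Xc → ℝ) (mc : Xc → ℝ)
    (π : Xc → X) (Γ : Subgroup (Equiv.Perm Xc))
    (hwg : IsWeightedGraph b m) (hwgc : IsWeightedGraph bc mc)
    (hcov : IsRegularCovering b m bc mc π Γ)
    (pc : ℝ → Xc → Xc → ℝ)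
    (hnn : ∀ t, 0 ≤ t → ∀ xc yc, 0 ≤ pc t xc yc)
    (h0 : ∀ xc yc : Xc, pc 0 xc yc = (if yc = xc then 1 else 0) / mc xc)
    (hheat : ∀ xc yc t, 0 ≤ t →
      HasDerivWithinAt (fun s => pc s xc yc)
        (-(lap bc mc (fun z => pc t z yc) xc)) (Set.Ici 0) t)
    (hinv : ∀ γ ∈ Γ, ∀ t, 0 ≤ t → ∀ xc yc, pc t (γ xc) (γ yc) = pc t xc yc)
    (hsub : ∀ t, 0 ≤ t → ∀ xc,
      Summable (fun yc => pc t xc yc * mc yc) ∧ ∑' yc, pc t xc yc * mc yc ≤ 1)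
    (hdom : ∀ (xc : Xc) (T : ℝ), 0 < T → ∃ F : Xc → ℝ,
      Summable (fun yc => F yc * mc yc) ∧
        ∀ yc, ∀ t ∈ Set.Icc (0 : ℝ) T, pc t xc yc ≤ F yc) :
    ∃ q : ℝ → X → X → ℝ,
      (∀ t, 0 ≤ t → ∀ (x y : X) (xc : Xc), π xc = x →
        Summable (fun yc : {yc : Xc // π yc = y} => pc t xc yc.1) ∧
          q t x y = ∑' yc : {yc : Xc // π yc = y}, pc t xc yc.1) ∧
      (∀ t, 0 ≤ t → ∀ x y, q t x y ≤ 1 / m y) ∧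
      (∀ t, 0 < t → ∀ x y,
        HasDerivAt (fun s => q s x y) (-(lap b m (fun z => q t z y) x)) t) ∧
      (∀ x y : X, q 0 x y = (if y = x then 1 else 0) / m x) ∧
      (∀ x y : X, Tendsto (fun t => q t x y) (nhdsWithin 0 (Set.Ioi 0))
        (𝓝 (q 0 x y))) := by
  obtain ⟨hbnn, hbsym, hbdiag, hbfin, hmpos, -⟩ := hwg
  obtain ⟨hbcnn, hbcsym, hbcdiag, hbcfin, hmcpos, -⟩ := hwgc
  obtain ⟨hπsurj, hπbij, hπb, hπm, hγπ, hγb, htrans⟩ := hcov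
  set xr : X → Xc := Function.surjInv hπsurj with hxrdef
  have hxr : ∀ x, π (xr x) = x := fun x => Function.surjInv_eq hπsurj x
  have hfm : ∀ (y : X) (yc : {yc : Xc // π yc = y}), mc yc.1 = m y := fun y yc => by
    rw [hπm yc.1, yc.2]
  -- summability on fibers
  have hfibsum : ∀ (f : Xc → ℝ), Summable (fun yc => f yc * mc yc) →
      ∀ y : X, Summable (fun yc : {yc : Xc // π yc = y} => f yc.1) := by
    intro f hf y
    have h1 : Summable (fun yc : {yc : Xc // π yc = y} => f yc.1 * mc yc.1) :=
      hf.subtype _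
    refine (h1.mul_right (1 / m y)).congr fun yc => ?_
    rw [hfm y yc, mul_one_div, mul_div_assoc, div_self (hmpos y).ne', mul_one]
  have hsumf : ∀ t, 0 ≤ t → ∀ (zc : Xc) (y : X),
      Summable (fun yc : {yc : Xc // π yc = y} => pc t zc yc.1) :=
    fun t ht zc y => hfibsum _ (hsub t ht zc).1 y
  -- independence of the choice of the point in the fiber
  have hindep : ∀ t, 0 ≤ t → ∀ (y : X) (xc xc' : Xc), π xc = π xc' →
      (∑' yc : {yc : Xc // π yc = y}, pc t xc' yc.1)
        = ∑' yc : {yc : Xc // π yc = y}, pc t xc yc.1 := by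
    intro t ht y xc xc' hpi
    obtain ⟨γ, hγΓ, hγx⟩ := htrans xc xc' hpi
    have hπγ : ∀ zc, π (γ zc) = π zc := hγπ γ hγΓ
    have := Equiv.tsum_eq
      (Equiv.subtypeEquiv (γ : Equiv.Perm Xc) (fun a => by rw [hπγ a]) :
        {yc : Xc // π yc = y} ≃ {yc : Xc // π yc = y})
      (fun yc : {yc : Xc // π yc = y} => pc t xc' yc.1)
    rw [← this]
    refine tsum_congr fun yc => ?_
    show pc t xc' (γ yc.1) = pc t xc yc.1
    rw [← hγx]
    exact hinv γ hγΓ t ht xc yc.1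
  refine ⟨fun t x y => ∑' yc : {yc : Xc // π yc = y}, pc t (xr x) yc.1, ?_, ?_, ?_, ?_, ?_⟩
  · -- summability and independence of representative
    intro t ht x y xc hxc
    exact ⟨hsumf t ht xc y, hindep t ht y xc (xr x) (by rw [hxr, hxc])⟩
  · -- bound by 1 / m y
    intro t ht x y
    have h1 : (∑' yc : {yc : Xc // π yc = y}, pc t (xr x) yc.1 * mc yc.1)
        = (∑' yc : {yc : Xc // π yc = y}, pc t (xr x) yc.1) * m y := by
      rw [show (fun yc : {yc : Xc // π yc = y} => pc t (xr x) yc.1 * mc yc.1)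
            = fun yc : {yc : Xc // π yc = y} => pc t (xr x) yc.1 * m y from
          funext fun yc => by rw [hfm y yc]]
      exact tsum_mul_right
    have h2 : (∑' yc : {yc : Xc // π yc = y}, pc t (xr x) yc.1 * mc yc.1)
        ≤ ∑' yc : Xc, pc t (xr x) yc * mc yc :=
      Summable.tsum_le_tsum_of_inj Subtype.val Subtype.val_injective
        (fun c _ => mul_nonneg (hnn t ht _ c) (hmcpos c).le)
        (fun yc => le_rfl) ((hsub t ht _).1.subtype _) (hsub t ht _).1
    have h3 := (hsub t ht (xr x)).2
    rw [le_div_iff₀ (hmpos y)]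
    rw [h1] at h2
    exact h2.trans h3
  · -- heat equation on the base
    intro t ht x y
    show HasDerivAt (fun s => ∑' yc : {yc : Xc // π yc = y}, pc s (xr x) yc.1)
      (-(lap b m (fun z => ∑' yc : {yc : Xc // π yc = y}, pc t (xr z) yc.1) x)) t
    set xc := xr x with hxcdef
    have hxcx : π xc = x := hxr x
    set S : Finset Xc := (hbcfin xc).toFinset with hS
    have hmemS : ∀ zc, zc ∈ S ↔ 0 < bc xc zc := fun zc => Set.Finite.mem_toFinset _
    have hT : (0:ℝ) < t + 1 := by linarith
    choose F hFsum hFbd using fun zc => hdom zc (t + 1) hT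
    have hFfib : ∀ zc, Summable (fun yc : {yc : Xc // π yc = y} => F zc yc.1) :=
      fun zc => hfibsum _ (hFsum zc) y
    have hlapfin : ∀ (s : ℝ) (yc : Xc),
        lap bc mc (fun z => pc s z yc) xc
          = (1 / mc xc) * ∑ zc ∈ S, bc xc zc * (pc s xc yc - pc s zc yc) :=
      fun s yc => lap_eq_finsum bc mc _ xc (hbcnn xc) (hbcfin xc)
    have husum : Summable (fun yc : {yc : Xc // π yc = y} =>
        (1 / mc xc) * ∑ zc ∈ S, bc xc zc * (F xc yc.1 + F zc yc.1)) := by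
      refine Summable.mul_left _ (summable_sum fun zc _ => ?_)
      exact ((hFfib xc).add (hFfib zc)).mul_left _
    have hmem_t : t ∈ Set.Ioo (0:ℝ) (t + 1) := ⟨ht, by linarith⟩
    have hmain := hasDerivAt_tsum_of_isPreconnected
      (g := fun (yc : {yc : Xc // π yc = y}) (s : ℝ) => pc s xc yc.1)
      (g' := fun (yc : {yc : Xc // π yc = y}) (s : ℝ) =>
        -(lap bc mc (fun z => pc s z yc.1) xc))
      husum isOpen_Ioo isPreconnected_Ioo
      (fun yc s hs => (hheat xc yc.1 s hs.1.le).hasDerivAt (Ici_mem_nhds hs.1))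
      (fun yc s hs => by
        have hsIcc : s ∈ Set.Icc (0:ℝ) (t + 1) := ⟨hs.1.le, hs.2.le⟩
        have hmc0 : (0:ℝ) ≤ 1 / mc xc := by
          have := hmcpos xc; positivity
        rw [norm_neg, hlapfin, Real.norm_eq_abs, abs_mul, abs_of_nonneg hmc0]
        refine mul_le_mul_of_nonneg_left ?_ hmc0
        refine (Finset.abs_sum_le_sum_abs _ _).trans (Finset.sum_le_sum fun zc hz => ?_)
        rw [abs_mul, abs_of_nonneg (hbcnn xc zc)]
        refine mul_le_mul_of_nonneg_left ?_ (hbcnn xc zc)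
        calc |pc s xc yc.1 - pc s zc yc.1| ≤ |pc s xc yc.1| + |pc s zc yc.1| := abs_sub _ _
          _ = pc s xc yc.1 + pc s zc yc.1 := by
              rw [abs_of_nonneg (hnn s hs.1.le _ _), abs_of_nonneg (hnn s hs.1.le _ _)]
          _ ≤ F xc yc.1 + F zc yc.1 :=
              add_le_add (hFbd xc yc.1 s hsIcc) (hFbd zc yc.1 s hsIcc))
      hmem_t (hsumf t ht.le xc y) hmem_t
    have hq : ∀ (zc : Xc), (∑' yc : {yc : Xc // π yc = y}, pc t zc yc.1)
        = ∑' yc : {yc : Xc // π yc = y}, pc t (xr (π zc)) yc.1 :=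
      fun zc => (hindep t ht.le y zc (xr (π zc)) ((hxr (π zc)).symm)).symm
    have hval : (∑' yc : {yc : Xc // π yc = y}, -(lap bc mc (fun z => pc t z yc.1) xc))
        = -(lap b m (fun z => ∑' yc : {yc : Xc // π yc = y}, pc t (xr z) yc.1) x) := by
      have hsum1 : ∀ zc : Xc, Summable (fun yc : {yc : Xc // π yc = y} =>
          pc t xc yc.1 - pc t zc yc.1) :=
        fun zc => (hsumf t ht.le xc y).sub (hsumf t ht.le zc y)
      have step1 : (∑' yc : {yc : Xc // π yc = y}, -(lap bc mc (fun z => pc t z yc.1) xc))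
          = -((1 / mc xc) * ∑ zc ∈ S, bc xc zc *
              ((∑' yc : {yc : Xc // π yc = y}, pc t xc yc.1)
                - ∑' yc : {yc : Xc // π yc = y}, pc t zc yc.1)) := by
        rw [tsum_neg]
        congr 1
        rw [tsum_congr (fun yc : {yc : Xc // π yc = y} => hlapfin t yc.1), tsum_mul_left]
        congr 1
        rw [Summable.tsum_finsetSum (fun zc _ => (hsum1 zc).mul_left _)]
        refine Finset.sum_congr rfl fun zc _ => ?_
        rw [tsum_mul_left, Summable.tsum_sub (hsumf t ht.le xc y) (hsumf t ht.le zc y)]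
      rw [step1]
      rw [lap_eq_finsum b m _ x (hbnn x) (hbfin x)]
      have hbijx := hπbij xc
      rw [hxcx] at hbijx
      have hsums : (∑ zc ∈ S, bc xc zc *
              ((∑' yc : {yc : Xc // π yc = y}, pc t xc yc.1)
                - ∑' yc : {yc : Xc // π yc = y}, pc t zc yc.1))
          = ∑ z ∈ (hbfin x).toFinset, b x z *
              ((∑' yc : {yc : Xc // π yc = y}, pc t (xr x) yc.1)
                - ∑' yc : {yc : Xc // π yc = y}, pc t (xr z) yc.1) := by
        refine Finset.sum_bij (fun zc _ => π zc) ?_ ?_ ?_ ?_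
        · intro zc hz
          rw [Set.Finite.mem_toFinset]
          exact hbijx.mapsTo ((hmemS zc).1 hz)
        · intro a₁ h₁ a₂ h₂ h
          exact hbijx.injOn ((hmemS a₁).1 h₁) ((hmemS a₂).1 h₂) h
        · intro z hz
          obtain ⟨zc, hzc, hzz⟩ := hbijx.surjOn (by rwa [Set.Finite.mem_toFinset] at hz)
          exact ⟨zc, (hmemS zc).2 hzc, hzz⟩
        · intro zc hz
          rw [hπb xc zc ((hmemS zc).1 hz), hxcx, hq zc]
      rw [hsums, hπm xc, hxcx]
    rw [← hval]
    exact hmain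
  · -- initial condition
    intro x y
    show (∑' yc : {yc : Xc // π yc = y}, pc 0 (xr x) yc.1) = (if y = x then 1 else 0) / m x
    by_cases hxy : y = x
    · subst hxy
      rw [tsum_eq_single (⟨xr y, hxr y⟩ : {yc : Xc // π yc = y})]
      · rw [h0]
        simp [hπm (xr y), hxr y]
      · intro yc hne
        rw [h0]
        have hv : yc.1 ≠ xr y := fun h => hne (Subtype.ext h)
        simp [hv]
    · have hz : ∀ yc : {yc : Xc // π yc = y}, pc 0 (xr x) yc.1 = 0 := by
        intro yc
        rw [h0]
        have hv : yc.1 ≠ xr x := fun h => hxy (by rw [← yc.2, h, hxr])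
        simp [hv]
      rw [tsum_congr hz, tsum_zero]
      simp [hxy]
  · -- continuity at 0 from the right
    intro x y
    obtain ⟨F, hFsum, hFbd⟩ := hdom (xr x) 1 one_pos
    have hFf : Summable (fun yc : {yc : Xc // π yc = y} => F yc.1) := hfibsum F hFsum y
    have hconv : ∀ yc : {yc : Xc // π yc = y},
        Tendsto (fun t => pc t (xr x) yc.1) (𝓝[>] (0:ℝ)) (𝓝 (pc 0 (xr x) yc.1)) := by
      intro yc
      exact ((hheat (xr x) yc.1 0 le_rfl).continuousWithinAt).mono_left
        (nhdsWithin_mono 0 Set.Ioi_subset_Ici_self)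
    have hbd : ∀ᶠ t in 𝓝[>] (0:ℝ), ∀ yc : {yc : Xc // π yc = y},
        ‖pc t (xr x) yc.1‖ ≤ F yc.1 := by
      filter_upwards [Ioo_mem_nhdsGT_of_mem (Set.mem_Ico.2 ⟨le_rfl, one_pos⟩)] with t htt yc
      rw [Real.norm_eq_abs, abs_of_nonneg (hnn t htt.1.le _ _)]
      exact hFbd yc.1 t ⟨htt.1.le, htt.2.le⟩
    exact tendsto_tsum_of_dominated_convergence hFf hconv hbd
end

section
/- Let π : X̃→X, with deck group Γ, be a regular covering of a connected, locally finite, countably infinite weighted graph (X,b,m), with covering graph (X̃,b̃,m̃). Assume: (1) p̃ : [0,∞)×X̃×X̃→[0,∞) satisfies the properties of the minimal heat kernel of the cover listed before (initial condition 1_{x̃}(ỹ)/m̃(x̃), heat equation in the first variable, Γ-invariance, sub-Markov property, and for each x̃ and T>0 an ℓ¹(X̃,m̃)-function dominating sup_{t∈[0,T]} p̃_t(x̃,·)), and in addition p̃ is the pointwise increasing limit, along an exhaustion of X̃ by finite connected sets D̃_i, of Dirichlet heat kernels p̃^i each satisfying the Dirichlet heat kernel properties on D̃_i; (2) p : [0,∞)×X×X→[0,∞)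 satisfies p₀(x,y)=1_x(y)/m(x) and the heat equation ∂_t p_t(x,y) = −𝓛 p_t(·,y)(x), is minimal among all nonnegative such solutions, and dominates subsolutions: whenever w : [0,∞)×X→[0,∞) has finite spatial support, satisfies 𝓛 w_t(y) + ∂_t w_t(y) ≤ 0 on its support and w₀ ≤ 1_x/m(x), then w_t(y) ≤ p_t(x,y) for all t,y. Then for all t≥0, all x,y∈X and all x̃∈π⁻¹(x): p_t(x,y) = ∑_{ỹ∈π⁻¹(y)} p̃_t(x̃,ỹ). -/
open Filter Topology

/-!
Summing over fibres commutes with the Laplacian, because `π` maps the neighbourhood of every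
vertex of the cover bijectively onto a neighbourhood with the same weights and measures.
Since `p̃` is symmetric, being a limit of symmetric Dirichlet kernels, it also solves the heat
equation in its second variable, so `u_t(y) = ∑_{ỹ ∈ π⁻¹(y)} p̃_t(x̃, ỹ)` solves the heat
equation on `X` with initial value `1_x / m(x)`; the series may be differentiated term by term
thanks to the `ℓ¹(m̃)` domination of `p̃`. Hence `p ≤ u` by minimality of `p`. Conversely, the
fibre sums of the Dirichlet heat kernels `p̃^i` are finitely supported subsolutions, since at a
non-interior vertex the kernel vanishes and so has nonpositive Laplacian. Thus they are bounded
by `p`, and letting `i → ∞` gives `u ≤ p`.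
-/

open Filter Topology Set

section Laplacian

variable {X : Type*} {b : X → X → ℝ} {m : X → ℝ}

noncomputable def nbrs (b : X → X → ℝ) (hfin : ∀ x, {y | 0 < b x y}.Finite) (x : X) :
    Finset X :=
  (hfin x).toFinset

theorem mem_nbrs {hfin : ∀ x, {y | 0 < b x y}.Finite} {x y : X} :
    y ∈ nbrs b hfin x ↔ 0 < b x y := by
  simp [nbrs]

theorem lap_eq_sum_nbrs (hbnn : ∀ x y, 0 ≤ b x y) (hfin : ∀ x, {y | 0 < b x y}.Finite)
    (g : X → ℝ) (x : X) :
    lap b m g x = (1 / m x) *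
      ((∑ y ∈ nbrs b hfin x, b x y) * g x - ∑ y ∈ nbrs b hfin x, b x y * g y) := by
  have hzero : ∀ y ∉ nbrs b hfin x, b x y * (g x - g y) = 0 := fun y hy => by
    rw [le_antisymm (not_lt.1 (mt mem_nbrs.2 hy)) (hbnn x y), zero_mul]
  rw [lap, tsum_eq_sum hzero, Finset.sum_mul, ← Finset.sum_sub_distrib]
  simp only [mul_sub]

theorem abs_lap_le (hbnn : ∀ x y, 0 ≤ b x y) (hfin : ∀ x, {y | 0 < b x y}.Finite) {x : X}
    (hm : 0 < m x) {g F : X → ℝ} (hg : ∀ y, 0 ≤ g y) (hgF : ∀ y, g y ≤ F y) :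
    |lap b m g x| ≤ (1 / m x) *
      ((∑ y ∈ nbrs b hfin x, b x y) * F x + ∑ y ∈ nbrs b hfin x, b x y * F y) := by
  have hdeg : 0 ≤ ∑ y ∈ nbrs b hfin x, b x y := Finset.sum_nonneg fun y _ => hbnn x y
  have hself : 0 ≤ (∑ y ∈ nbrs b hfin x, b x y) * g x := mul_nonneg hdeg (hg x)
  have hself' : (∑ y ∈ nbrs b hfin x, b x y) * g x ≤ (∑ y ∈ nbrs b hfin x, b x y) * F x :=
    mul_le_mul_of_nonneg_left (hgF x) hdeg
  have hnbr : 0 ≤ ∑ y ∈ nbrs b hfin x, b x y * g y :=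
    Finset.sum_nonneg fun y _ => mul_nonneg (hbnn x y) (hg y)
  have hnbr' : ∑ y ∈ nbrs b hfin x, b x y * g y ≤ ∑ y ∈ nbrs b hfin x, b x y * F y :=
    Finset.sum_le_sum fun y _ => mul_le_mul_of_nonneg_left (hgF y) (hbnn x y)
  rw [lap_eq_sum_nbrs hbnn hfin, abs_mul, abs_of_nonneg (by positivity)]
  gcongr
  exact abs_sub_le_iff.2 ⟨by linarith, by linarith⟩

theorem lap_nonpos_of_eq_zero (hbnn : ∀ x y, 0 ≤ b x y) {x : X} (hm : 0 < m x) {g : X → ℝ}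
    (hg : ∀ y, 0 ≤ g y) (hx : g x = 0) : lap b m g x ≤ 0 := by
  rw [lap, hx]
  exact mul_nonpos_of_nonneg_of_nonpos (by positivity)
    (tsum_nonpos fun y => mul_nonpos_of_nonneg_of_nonpos (hbnn x y) (by linarith [hg y]))

end Laplacian

section Covering

variable {X Xc : Type*} {b : X → X → ℝ} {m : X → ℝ} {bc : Xc → Xc → ℝ} {mc : Xc → ℝ}
  {π : Xc → X}

noncomputable def fiberSum (π : Xc → X) (g : Xc → ℝ) (y : X) : ℝ :=
  ∑' yc : {yc : Xc // π yc = y}, g yc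

open Classical in
noncomputable def liftNbr (bc : Xc → Xc → ℝ) (π : Xc → X) (zc : Xc) (y : X) : Xc :=
  if h : ∃ yc, 0 < bc zc yc ∧ π yc = y then h.choose else zc

theorem liftNbr_spec (hbij : ∀ xc, BijOn π {yc | 0 < bc xc yc} {y | 0 < b (π xc) y})
    {zc : Xc} {y : X} (h : 0 < b (π zc) y) :
    0 < bc zc (liftNbr bc π zc y) ∧ π (liftNbr bc π zc y) = y := by
  obtain ⟨yc, hyc, hπ⟩ := (hbij zc).surjOn h
  have hex : ∃ yc, 0 < bc zc yc ∧ π yc = y := ⟨yc, hyc, hπ⟩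
  rw [liftNbr, dif_pos hex]
  exact hex.choose_spec

theorem eq_liftNbr (hbij : ∀ xc, BijOn π {yc | 0 < bc xc yc} {y | 0 < b (π xc) y})
    {zc yc : Xc} (h : 0 < bc zc yc) : yc = liftNbr bc π zc (π yc) := by
  obtain ⟨hpos, hπ⟩ := liftNbr_spec hbij ((hbij zc).mapsTo h)
  exact (hbij zc).injOn h hpos hπ.symm

theorem sum_nbrs_eq_sum_nbrs_liftNbr
    (hbij : ∀ xc, BijOn π {yc | 0 < bc xc yc} {y | 0 < b (π xc) y})
    (hbcompat : ∀ xc yc, 0 < bc xc yc → bc xc yc = b (π xc) (π yc))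
    (hfinc : ∀ x, {y | 0 < bc x y}.Finite) (hfin : ∀ x, {y | 0 < b x y}.Finite)
    (g : Xc → ℝ) (yc : Xc) :
    ∑ zc ∈ nbrs bc hfinc yc, bc yc zc * g zc
      = ∑ z ∈ nbrs b hfin (π yc), b (π yc) z * g (liftNbr bc π yc z) := by
  refine Finset.sum_nbij' π (liftNbr bc π yc) (fun zc hzc => ?_) (fun z hz => ?_)
    (fun zc hzc => ?_) (fun z hz => ?_) (fun zc hzc => ?_)
  · exact mem_nbrs.2 ((hbij yc).mapsTo (mem_nbrs.1 hzc))
  · exact mem_nbrs.2 (liftNbr_spec hbij (mem_nbrs.1 hz)).1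
  · exact (eq_liftNbr hbij (mem_nbrs.1 hzc)).symm
  · exact (liftNbr_spec hbij (mem_nbrs.1 hz)).2
  · rw [hbcompat yc zc (mem_nbrs.1 hzc), ← eq_liftNbr hbij (mem_nbrs.1 hzc)]

theorem sum_nbrs_weight_eq (hbij : ∀ xc, BijOn π {yc | 0 < bc xc yc} {y | 0 < b (π xc) y})
    (hbcompat : ∀ xc yc, 0 < bc xc yc → bc xc yc = b (π xc) (π yc))
    (hfinc : ∀ x, {y | 0 < bc x y}.Finite) (hfin : ∀ x, {y | 0 < b x y}.Finite) (yc : Xc) :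
    ∑ zc ∈ nbrs bc hfinc yc, bc yc zc = ∑ z ∈ nbrs b hfin (π yc), b (π yc) z := by
  simpa using sum_nbrs_eq_sum_nbrs_liftNbr hbij hbcompat hfinc hfin (fun _ => 1) yc

noncomputable def fiberEquiv (hbij : ∀ xc, BijOn π {yc | 0 < bc xc yc} {y | 0 < b (π xc) y})
    (hbsymm : ∀ x y, b x y = b y x) (hbcsymm : ∀ x y, bc x y = bc y x) {y z : X}
    (h : 0 < b y z) : {yc : Xc // π yc = y} ≃ {zc : Xc // π zc = z} where
  toFun yc := ⟨liftNbr bc π yc z, (liftNbr_spec hbij (by rw [yc.2]; exact h)).2⟩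
  invFun zc := ⟨liftNbr bc π zc y, (liftNbr_spec hbij (by rw [zc.2, hbsymm]; exact h)).2⟩
  left_inv yc := by
    obtain ⟨hpos, -⟩ := liftNbr_spec hbij (show 0 < b (π yc) z by rw [yc.2]; exact h)
    exact Subtype.ext ((eq_liftNbr hbij (hbcsymm _ _ ▸ hpos)).trans (by rw [yc.2])).symm
  right_inv zc := by
    obtain ⟨hpos, -⟩ := liftNbr_spec hbij (show 0 < b (π zc) y by rw [zc.2, hbsymm]; exact h)
    exact Subtype.ext ((eq_liftNbr hbij (hbcsymm _ _ ▸ hpos)).trans (by rw [zc.2])).symm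

theorem hasSum_fiber_sum_nbrs (hbij : ∀ xc, BijOn π {yc | 0 < bc xc yc} {y | 0 < b (π xc) y})
    (hbcompat : ∀ xc yc, 0 < bc xc yc → bc xc yc = b (π xc) (π yc))
    (hbsymm : ∀ x y, b x y = b y x) (hbcsymm : ∀ x y, bc x y = bc y x)
    (hfinc : ∀ x, {y | 0 < bc x y}.Finite) (hfin : ∀ x, {y | 0 < b x y}.Finite)
    {g : Xc → ℝ} (hg : ∀ z, Summable fun zc : {zc : Xc // π zc = z} => g zc) (y : X) :
    HasSum (fun yc : {yc : Xc // π yc = y} => ∑ zc ∈ nbrs bc hfinc yc, bc yc zc * g zc)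
      (∑ z ∈ nbrs b hfin y, b y z * fiberSum π g z) := by
  have hlift : (fun yc : {yc : Xc // π yc = y} => ∑ zc ∈ nbrs bc hfinc yc, bc yc zc * g zc)
      = fun yc : {yc : Xc // π yc = y} => ∑ z ∈ nbrs b hfin y, b y z * g (liftNbr bc π yc z) := by
    ext yc
    rw [sum_nbrs_eq_sum_nbrs_liftNbr hbij hbcompat hfinc hfin, yc.2]
  rw [hlift]
  refine hasSum_sum fun z hz => HasSum.mul_left _ ?_
  exact (fiberEquiv hbij hbsymm hbcsymm (mem_nbrs.1 hz)).hasSum_iff.2 (hg z).hasSum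

theorem hasSum_lap_fiber (hbij : ∀ xc, BijOn π {yc | 0 < bc xc yc} {y | 0 < b (π xc) y})
    (hbcompat : ∀ xc yc, 0 < bc xc yc → bc xc yc = b (π xc) (π yc))
    (hbsymm : ∀ x y, b x y = b y x) (hbcsymm : ∀ x y, bc x y = bc y x)
    (hbnn : ∀ x y, 0 ≤ b x y) (hbcnn : ∀ x y, 0 ≤ bc x y)
    (hfinc : ∀ x, {y | 0 < bc x y}.Finite) (hfin : ∀ x, {y | 0 < b x y}.Finite)
    (hmc : ∀ xc, mc xc = m (π xc))
    {g : Xc → ℝ} (hg : ∀ z, Summable fun zc : {zc : Xc // π zc = z} => g zc) (y : X) :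
    HasSum (fun yc : {yc : Xc // π yc = y} => lap bc mc g yc) (lap b m (fiberSum π g) y) := by
  set B := ∑ z ∈ nbrs b hfin y, b y z
  have hterm : (fun yc : {yc : Xc // π yc = y} => lap bc mc g yc)
      = fun yc : {yc : Xc // π yc = y} => (1 / m y) * (B * g yc - ∑ zc ∈ nbrs bc hfinc yc, bc yc zc * g zc) := by
    ext yc
    rw [lap_eq_sum_nbrs hbcnn hfinc, hmc, sum_nbrs_weight_eq hbij hbcompat hfinc hfin, yc.2]
  rw [hterm, lap_eq_sum_nbrs hbnn hfin]
  exact (((hg y).hasSum.mul_left B).sub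
    (hasSum_fiber_sum_nbrs hbij hbcompat hbsymm hbcsymm hfinc hfin hg y)).mul_left _

theorem summable_fiber_of_summable_mul (hmc : ∀ xc, mc xc = m (π xc)) (hmpos : ∀ x, 0 < m x)
    {F : Xc → ℝ} (hF : Summable fun zc => F zc * mc zc) (z : X) :
    Summable fun zc : {zc : Xc // π zc = z} => F zc := by
  have hfib : (fun zc : {zc : Xc // π zc = z} => F zc)
      = fun zc : {zc : Xc // π zc = z} => F zc * mc zc * (1 / m z) := by
    ext zc
    rw [hmc, zc.2]
    exact mul_mul_div _ (hmpos z).ne'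
  exact hfib ▸ (hF.subtype {zc | π zc = z}).mul_right _

theorem summable_fiber_of_le (hmc : ∀ xc, mc xc = m (π xc)) (hmpos : ∀ x, 0 < m x)
    {g F : Xc → ℝ} (hg : ∀ c, 0 ≤ g c) (hgF : ∀ c, g c ≤ F c)
    (hF : Summable fun zc => F zc * mc zc) (z : X) :
    Summable fun zc : {zc : Xc // π zc = z} => g zc :=
  (summable_fiber_of_summable_mul hmc hmpos hF z).of_nonneg_of_le (fun _ => hg _) (fun _ => hgF _)

theorem hasSum_fiber_of_support_subset [DecidableEq X] (D : Finset Xc) {g : Xc → ℝ}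
    (hg : ∀ c ∉ D, g c = 0) (z : X) :
    HasSum (fun zc : {zc : Xc // π zc = z} => g zc) (∑ zc ∈ D.subtype (π · = z), g zc) :=
  hasSum_sum_of_ne_finset_zero fun zc hzc => hg zc (by simpa using hzc)

theorem fiberSum_delta [DecidableEq X] [DecidableEq Xc] (hmc : ∀ xc, mc xc = m (π xc))
    (xc : Xc) (z : X) :
    fiberSum π (fun yc => (if yc = xc then 1 else 0) / mc xc) z
      = (if z = π xc then 1 else 0) / m (π xc) := by
  by_cases hz : z = π xc
  · subst hz
    rw [fiberSum, tsum_eq_single ⟨xc, rfl⟩ fun yc hyc => by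
      rw [if_neg (fun h => hyc (Subtype.ext h)), zero_div]]
    simp [hmc]
  · have hzero : ∀ yc : {yc : Xc // π yc = z}, (if (yc : Xc) = xc then 1 else 0) / mc xc = 0 :=
      fun yc => by rw [if_neg (fun h => hz (by rw [← yc.2, h])), zero_div]
    rw [fiberSum, tsum_congr hzero, tsum_zero, if_neg hz, zero_div]

end Covering

theorem hasDerivWithinAt_tsum_of_bound {ι : Type*} {s : Set ℝ} (hs : Convex ℝ s)
    {f f' : ι → ℝ → ℝ} {u : ι → ℝ} (hu : Summable u) {t : ℝ} (ht : t ∈ s)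
    (hf : ∀ r ∈ s, Summable fun n => f n r)
    (hderiv : ∀ n, ∀ r ∈ s, HasDerivWithinAt (f n) (f' n r) s r)
    (hbound : ∀ n, ∀ r ∈ s, |f' n r| ≤ u n) :
    HasDerivWithinAt (fun r => ∑' n, f n r) (∑' n, f' n t) s t := by
  rw [hasDerivWithinAt_iff_tendsto_slope]
  have hslope_le : ∀ᶠ r in 𝓝[s \ {t}] t, ∀ n, ‖slope (f n) t r‖ ≤ u n := by
    filter_upwards [self_mem_nhdsWithin] with r hr n
    obtain ⟨hr, hrt⟩ := hr
    have hlip : ‖f n r - f n t‖ ≤ u n * ‖r - t‖ :=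
      hs.norm_image_sub_le_of_norm_hasDerivWithin_le (hderiv n) (hbound n) ht hr
    have hrt' : 0 < ‖r - t‖ := norm_pos_iff.2 (sub_ne_zero.2 hrt)
    rw [slope_def_field, norm_div]
    exact (div_le_iff₀ hrt').2 hlip
  have hlim := tendsto_tsum_of_dominated_convergence hu
    (fun n => hasDerivWithinAt_iff_tendsto_slope.1 (hderiv n t ht)) hslope_le
  refine hlim.congr' ?_
  filter_upwards [self_mem_nhdsWithin] with r hr
  simp only [slope_def_field]
  rw [tsum_div_const, (hf r hr.1).tsum_sub (hf t ht)]

section HeatEquation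

variable {X Xc : Type*} {b : X → X → ℝ} {m : X → ℝ} {bc : Xc → Xc → ℝ} {mc : Xc → ℝ}
  {π : Xc → X}

theorem hasDerivWithinAt_fiberSum_of_heat
    (hbij : ∀ xc, BijOn π {yc | 0 < bc xc yc} {y | 0 < b (π xc) y})
    (hbcompat : ∀ xc yc, 0 < bc xc yc → bc xc yc = b (π xc) (π yc))
    (hbsymm : ∀ x y, b x y = b y x) (hbcsymm : ∀ x y, bc x y = bc y x)
    (hbnn : ∀ x y, 0 ≤ b x y) (hbcnn : ∀ x y, 0 ≤ bc x y)
    (hfinc : ∀ x, {y | 0 < bc x y}.Finite) (hfin : ∀ x, {y | 0 < b x y}.Finite)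
    (hmc : ∀ xc, mc xc = m (π xc)) (hmpos : ∀ x, 0 < m x) {q : ℝ → Xc → ℝ}
    (hq_nn : ∀ t, 0 ≤ t → ∀ c, 0 ≤ q t c)
    (hq_heat : ∀ c t, 0 ≤ t →
      HasDerivWithinAt (fun s => q s c) (-(lap bc mc (q t) c)) (Ici 0) t)
    (hq_dom : ∀ T, 0 < T → ∃ F : Xc → ℝ,
      Summable (fun c => F c * mc c) ∧ ∀ c, ∀ t ∈ Icc (0 : ℝ) T, q t c ≤ F c)
    (z : X) {t : ℝ} (ht : 0 ≤ t) :
    HasDerivWithinAt (fun s => fiberSum π (q s) z) (-(lap b m (fiberSum π (q t)) z))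
      (Ici 0) t := by
  obtain ⟨F, hF, hqF⟩ := hq_dom (t + 1) (by linarith)
  have hFfib := summable_fiber_of_summable_mul hmc hmpos hF
  have hqfib : ∀ s ∈ Icc (0 : ℝ) (t + 1), ∀ z,
      Summable fun zc : {zc : Xc // π zc = z} => q s zc :=
    fun s hs => summable_fiber_of_le hmc hmpos (hq_nn s hs.1) (hqF · s hs) hF
  set B := ∑ w ∈ nbrs b hfin z, b z w
  have hbound : ∀ (zc : {zc : Xc // π zc = z}), ∀ s ∈ Icc (0 : ℝ) (t + 1),
      |-lap bc mc (q s) zc| ≤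
        (1 / m z) * (B * F zc + ∑ wc ∈ nbrs bc hfinc zc, bc zc wc * F wc) := by
    intro zc s hs
    have h := abs_lap_le hbcnn hfinc (x := zc.1) (m := mc) (by rw [hmc]; exact hmpos _)
      (hq_nn s hs.1) (hqF · s hs)
    rw [abs_neg]
    rwa [hmc, sum_nbrs_weight_eq hbij hbcompat hfinc hfin, zc.2] at h
  have hder := hasDerivWithinAt_tsum_of_bound (convex_Icc 0 (t + 1))
    ((((hFfib z).mul_left B).add
      (hasSum_fiber_sum_nbrs hbij hbcompat hbsymm hbcsymm hfinc hfin hFfib z).summable).mul_left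
        (1 / m z))
    ⟨ht, by linarith⟩ (fun s hs => hqfib s hs z)
    (fun zc s hs => (hq_heat zc s hs.1).mono Icc_subset_Ici_self) hbound
  rw [← (hasSum_lap_fiber hbij hbcompat hbsymm hbcsymm hbnn hbcnn hfinc hfin hmc
    (hqfib t ⟨ht, by linarith⟩) z).tsum_eq, ← tsum_neg]
  refine hder.mono_of_mem_nhdsWithin ?_
  rw [← Ici_inter_Iic]
  exact inter_mem_nhdsWithin _ (Iic_mem_nhds (by linarith))

def IsInteriorVertex (bc : Xc → Xc → ℝ) (D : Finset Xc) (c : Xc) : Prop :=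
  c ∈ D ∧ ∀ e, 0 < bc c e → e ∈ D

theorem exists_hasDerivWithinAt_fiberSum_lap_add_nonpos
    (hbij : ∀ xc, BijOn π {yc | 0 < bc xc yc} {y | 0 < b (π xc) y})
    (hbcompat : ∀ xc yc, 0 < bc xc yc → bc xc yc = b (π xc) (π yc))
    (hbsymm : ∀ x y, b x y = b y x) (hbcsymm : ∀ x y, bc x y = bc y x)
    (hbnn : ∀ x y, 0 ≤ b x y) (hbcnn : ∀ x y, 0 ≤ bc x y)
    (hfinc : ∀ x, {y | 0 < bc x y}.Finite) (hfin : ∀ x, {y | 0 < b x y}.Finite)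
    (hmc : ∀ xc, mc xc = m (π xc)) (hmcpos : ∀ xc, 0 < mc xc)
    (D : Finset Xc) {q : ℝ → Xc → ℝ} (hq_nn : ∀ t, 0 ≤ t → ∀ c, 0 ≤ q t c)
    (hq_vanish : ∀ t, 0 ≤ t → ∀ c, ¬IsInteriorVertex bc D c → q t c = 0)
    (hq_heat : ∀ c, IsInteriorVertex bc D c → ∀ t, 0 ≤ t →
      HasDerivWithinAt (fun s => q s c) (-(lap bc mc (q t) c)) (Ici 0) t)
    (z : X) {t : ℝ} (ht : 0 ≤ t) :
    ∃ w', HasDerivWithinAt (fun s => fiberSum π (q s) z) w' (Ici 0) t ∧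
      lap b m (fiberSum π (q t)) z + w' ≤ 0 := by
  classical
  let q' : Xc → ℝ := fun c => if IsInteriorVertex bc D c then -lap bc mc (q t) c else 0
  have hq_supp : ∀ s, 0 ≤ s → ∀ c ∉ D, q s c = 0 :=
    fun s hs c hc => hq_vanish s hs c fun h => hc h.1
  have hq'_supp : ∀ c ∉ D, q' c = 0 := fun c hc => if_neg fun h => hc h.1
  have hfib : ∀ s, 0 ≤ s → ∀ z,
      HasSum (fun zc : {zc : Xc // π zc = z} => q s zc) (∑ zc ∈ D.subtype (π · = z), q s zc) :=
    fun s hs => hasSum_fiber_of_support_subset D (hq_supp s hs)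
  have hq' := hasSum_fiber_of_support_subset (π := π) D hq'_supp z
  refine ⟨∑ zc ∈ D.subtype (π · = z), q' zc, ?_, ?_⟩
  · have hsum : HasDerivWithinAt (fun s => ∑ zc ∈ D.subtype (π · = z), q s zc)
        (∑ zc ∈ D.subtype (π · = z), q' zc) (Ici 0) t := by
      refine HasDerivWithinAt.fun_sum fun zc _ => ?_
      by_cases hint : IsInteriorVertex bc D zc
      · simpa only [q', if_pos hint] using hq_heat zc hint t ht
      · simp only [q', if_neg hint]
        exact (hasDerivWithinAt_const t (Ici 0) 0).congr
          (fun s hs => hq_vanish s hs zc hint) (hq_vanish t ht zc hint)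
    exact hsum.congr (fun s hs => (hfib s hs z).tsum_eq) (hfib t ht z).tsum_eq
  · have hlap := hasSum_lap_fiber hbij hbcompat hbsymm hbcsymm hbnn hbcnn hfinc hfin hmc
      (fun z => (hfib t ht z).summable) z
    refine hasSum_le (fun zc => ?_) (hlap.add hq') hasSum_zero
    by_cases hint : IsInteriorVertex bc D zc
    · simp [q', if_pos hint]
    · simpa [q', if_neg hint] using
        lap_nonpos_of_eq_zero hbcnn (hmcpos zc) (hq_nn t ht) (hq_vanish t ht zc hint)

theorem le_of_subsolution [DecidableEq X] {p : ℝ → X → X → ℝ}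
    (hdomsub : ∀ (x : X) (w : ℝ → X → ℝ) (S : Set X), S.Finite →
      (∀ t, 0 ≤ t → ∀ y, 0 ≤ w t y) →
      (∀ t (y : X), y ∉ S → w t y = 0) →
      (∀ y ∈ S, ∀ t, 0 ≤ t → ∃ w' : ℝ,
        HasDerivWithinAt (fun s => w s y) w' (Ici 0) t ∧ lap b m (w t) y + w' ≤ 0) →
      (∀ y : X, w 0 y ≤ (if y = x then 1 else 0) / m x) →
      ∀ t, 0 ≤ t → ∀ y, w t y ≤ p t x y)
    (x : X) (w : ℝ → X → ℝ) {S : Set X} (hS : S.Finite)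
    (hw_nn : ∀ t, 0 ≤ t → ∀ y, 0 ≤ w t y) (hw_supp : ∀ t, 0 ≤ t → ∀ y ∉ S, w t y = 0)
    (hw_sub : ∀ y ∈ S, ∀ t, 0 ≤ t → ∃ w' : ℝ,
      HasDerivWithinAt (fun s => w s y) w' (Ici 0) t ∧ lap b m (w t) y + w' ≤ 0)
    (hw0 : ∀ y, w 0 y ≤ (if y = x then 1 else 0) / m x) {t : ℝ} (ht : 0 ≤ t) (y : X) :
    w t y ≤ p t x y := by
  -- `hdomsub` constrains all times, so `w` is frozen at its initial value for `t < 0`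
  have hext := hdomsub x (fun s => w (max s 0)) S hS
    (fun s _ y => hw_nn _ (le_max_right _ _) y)
    (fun s y hy => hw_supp _ (le_max_right _ _) y hy)
    (fun y hy s hs => ?_) (by simpa using hw0) t ht y
  · simpa [max_eq_left ht] using hext
  obtain ⟨w', hderiv, hle⟩ := hw_sub y hy s hs
  refine ⟨w', hderiv.congr (fun r hr => by simp [max_eq_left (mem_Ici.1 hr)]) ?_, ?_⟩
  · simp [max_eq_left hs]
  · simpa [max_eq_left hs] using hle

theorem sum_fiber_le_of_dirichlet [DecidableEq X] [DecidableEq Xc]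
    (hbij : ∀ xc, BijOn π {yc | 0 < bc xc yc} {y | 0 < b (π xc) y})
    (hbcompat : ∀ xc yc, 0 < bc xc yc → bc xc yc = b (π xc) (π yc))
    (hbsymm : ∀ x y, b x y = b y x) (hbcsymm : ∀ x y, bc x y = bc y x)
    (hbnn : ∀ x y, 0 ≤ b x y) (hbcnn : ∀ x y, 0 ≤ bc x y)
    (hfinc : ∀ x, {y | 0 < bc x y}.Finite) (hfin : ∀ x, {y | 0 < b x y}.Finite)
    (hmc : ∀ xc, mc xc = m (π xc)) (hmcpos : ∀ xc, 0 < mc xc) {p : ℝ → X → X → ℝ}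
    (hdomsub : ∀ (x : X) (w : ℝ → X → ℝ) (S : Set X), S.Finite →
      (∀ t, 0 ≤ t → ∀ y, 0 ≤ w t y) →
      (∀ t (y : X), y ∉ S → w t y = 0) →
      (∀ y ∈ S, ∀ t, 0 ≤ t → ∃ w' : ℝ,
        HasDerivWithinAt (fun s => w s y) w' (Ici 0) t ∧ lap b m (w t) y + w' ≤ 0) →
      (∀ y : X, w 0 y ≤ (if y = x then 1 else 0) / m x) →
      ∀ t, 0 ≤ t → ∀ y, w t y ≤ p t x y)
    (D : Finset Xc) (q : ℝ → Xc → Xc → ℝ) (hq_nn : ∀ t, 0 ≤ t → ∀ a c, 0 ≤ q t a c)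
    (hq_vanish : ∀ t, 0 ≤ t → ∀ a c,
      (¬IsInteriorVertex bc D a ∨ ¬IsInteriorVertex bc D c) → q t a c = 0)
    (hq_heat : ∀ a c, IsInteriorVertex bc D c → ∀ t, 0 ≤ t →
      HasDerivWithinAt (fun s => q s a c) (-(lap bc mc (fun z => q t a z) c)) (Ici 0) t)
    (hq0 : ∀ a c, IsInteriorVertex bc D a → IsInteriorVertex bc D c →
      q 0 a c = (if c = a then 1 else 0) / mc a)
    {t : ℝ} (ht : 0 ≤ t) (xc : Xc) (y : X) (s : Finset {yc : Xc // π yc = y}) :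
    ∑ yc ∈ s, q t xc yc ≤ p t (π xc) y := by
  have hq_supp : ∀ t, 0 ≤ t → ∀ c ∉ D, q t xc c = 0 :=
    fun t ht c hc => hq_vanish t ht xc c (Or.inr fun h => hc h.1)
  have hfib := fun t ht => hasSum_fiber_of_support_subset (π := π) D (hq_supp t ht)
  have hq0_le : ∀ c, q 0 xc c ≤ (if c = xc then 1 else 0) / mc xc := fun c => by
    by_cases hint : IsInteriorVertex bc D xc ∧ IsInteriorVertex bc D c
    · exact (hq0 xc c hint.1 hint.2).le
    · rw [hq_vanish 0 le_rfl xc c (not_and_or.1 hint)]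
      exact div_nonneg (by split_ifs <;> norm_num) (hmcpos xc).le
  have hdelta := hasSum_fiber_of_support_subset (π := π) {xc}
    (g := fun c => (if c = xc then 1 else 0) / mc xc) fun c hc => by
      rw [if_neg (Finset.notMem_singleton.1 hc), zero_div]
  calc ∑ yc ∈ s, q t xc yc ≤ fiberSum π (q t xc) y :=
        (hfib t ht y).summable.sum_le_tsum s fun yc _ => hq_nn t ht xc yc
    _ ≤ p t (π xc) y := by
      refine le_of_subsolution hdomsub (π xc) (fun s => fiberSum π (q s xc))
        (D.finite_toSet.image π) (fun s hs z => tsum_nonneg fun zc => hq_nn s hs xc zc)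
        (fun s hs z hz => ?_) (fun z _ s hs => ?_) (fun z => ?_) ht y
      · show ∑' zc : {zc : Xc // π zc = z}, q s xc zc = 0
        exact (tsum_congr fun zc : {zc : Xc // π zc = z} =>
          hq_supp s hs zc fun h => hz ⟨zc.1, h, zc.2⟩).trans tsum_zero
      · exact exists_hasDerivWithinAt_fiberSum_lap_add_nonpos hbij hbcompat hbsymm hbcsymm
          hbnn hbcnn hfinc hfin hmc hmcpos D (q := fun s => q s xc) (hq_nn · · xc)
          (fun s hs c hc => hq_vanish s hs xc c (Or.inr hc)) (hq_heat xc) z hs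
      · rw [← fiberSum_delta hmc xc z]
        exact (hfib 0 le_rfl z).summable.tsum_le_tsum (fun zc => hq0_le zc)
          (hdelta z).summable

end HeatEquation

theorem stmt11_general {X Xc : Type*} [DecidableEq X] [DecidableEq Xc]
    (b : X → X → ℝ) (m : X → ℝ) (bc : Xc → Xc → ℝ) (mc : Xc → ℝ)
    (π : Xc → X) (Γ : Subgroup (Equiv.Perm Xc))
    (hwg : IsWeightedGraph b m) (hwgc : IsWeightedGraph bc mc)
    (hcov : IsRegularCovering b m bc mc π Γ)
    -- the minimal heat kernel of the cover
    (pc : ℝ → Xc → Xc → ℝ)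
    (hnn : ∀ t, 0 ≤ t → ∀ xc yc, 0 ≤ pc t xc yc)
    (h0 : ∀ xc yc : Xc, pc 0 xc yc = (if yc = xc then 1 else 0) / mc xc)
    (hheat : ∀ xc yc t, 0 ≤ t →
      HasDerivWithinAt (fun s => pc s xc yc)
        (-(lap bc mc (fun z => pc t z yc) xc)) (Set.Ici 0) t)
    (hdom : ∀ (xc : Xc) (T : ℝ), 0 < T → ∃ F : Xc → ℝ,
      Summable (fun yc => F yc * mc yc) ∧
        ∀ yc, ∀ t ∈ Set.Icc (0 : ℝ) T, pc t xc yc ≤ F yc)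
    -- an exhaustion of the cover by finite connected sets
    (Dc : ℕ → Finset Xc)
    -- the Dirichlet heat kernels of the exhaustion sets
    (pDi : ℕ → ℝ → Xc → Xc → ℝ)
    (hDinn : ∀ i t, 0 ≤ t → ∀ a c, 0 ≤ pDi i t a c)
    (hDisymm : ∀ i t, 0 ≤ t → ∀ a c, pDi i t a c = pDi i t c a)
    (hDivanish : ∀ i t, 0 ≤ t → ∀ a c,
      (¬(a ∈ Dc i ∧ ∀ e, 0 < bc a e → e ∈ Dc i) ∨
        ¬(c ∈ Dc i ∧ ∀ e, 0 < bc c e → e ∈ Dc i)) → pDi i t a c = 0)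
    (hDiheat : ∀ i a c, (c ∈ Dc i ∧ ∀ e, 0 < bc c e → e ∈ Dc i) → ∀ t, 0 ≤ t →
      HasDerivWithinAt (fun s => pDi i s a c)
        (-(lap bc mc (fun z => pDi i t a z) c)) (Set.Ici 0) t)
    (hDi0 : ∀ i a c, (a ∈ Dc i ∧ ∀ e, 0 < bc a e → e ∈ Dc i) →
      (c ∈ Dc i ∧ ∀ e, 0 < bc c e → e ∈ Dc i) →
      pDi i 0 a c = (if c = a then 1 else 0) / mc a)
    -- `pc` is the pointwise increasing limit of the Dirichlet kernels
    (hDilim : ∀ t, 0 ≤ t → ∀ a c,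
      Monotone (fun i => pDi i t a c) ∧
        Filter.Tendsto (fun i => pDi i t a c) Filter.atTop (𝓝 (pc t a c)))
    -- the minimal heat kernel of the base
    (p : ℝ → X → X → ℝ)
    -- minimality of `p` among nonnegative solutions of the heat equation
    (hmin : ∀ (x : X) (u : ℝ → X → ℝ),
      (∀ t, 0 ≤ t → ∀ y, 0 ≤ u t y) →
      (∀ y : X, u 0 y = (if y = x then 1 else 0) / m x) →
      (∀ y t, 0 ≤ t →
        HasDerivWithinAt (fun s => u s y) (-(lap b m (u t) y)) (Set.Ici 0) t) →
      ∀ t, 0 ≤ t → ∀ y, p t x y ≤ u t y)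
    -- `p` dominates finitely supported subsolutions of the heat equation
    (hdomsub : ∀ (x : X) (w : ℝ → X → ℝ) (S : Set X), S.Finite →
      (∀ t, 0 ≤ t → ∀ y, 0 ≤ w t y) →
      (∀ t (y : X), y ∉ S → w t y = 0) →
      (∀ y ∈ S, ∀ t, 0 ≤ t → ∃ w' : ℝ,
        HasDerivWithinAt (fun s => w s y) w' (Set.Ici 0) t ∧
          lap b m (w t) y + w' ≤ 0) →
      (∀ y : X, w 0 y ≤ (if y = x then 1 else 0) / m x) →
      ∀ t, 0 ≤ t → ∀ y, w t y ≤ p t x y) :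
    ∀ t, 0 ≤ t → ∀ (x y : X) (xc : Xc), π xc = x →
      Summable (fun yc : {yc : Xc // π yc = y} => pc t xc yc.1) ∧
        p t x y = ∑' yc : {yc : Xc // π yc = y}, pc t xc yc.1 := by
  obtain ⟨hbnn, hbsymm, -, hfin, hmpos, -⟩ := hwg
  obtain ⟨hbcnn, hbcsymm, -, hfinc, hmcpos, -⟩ := hwgc
  obtain ⟨-, hbij, hbcompat, hmc, -⟩ := hcov
  have hsymm : ∀ t, 0 ≤ t → ∀ a c, pc t a c = pc t c a := fun t ht a c =>
    tendsto_nhds_unique (hDilim t ht a c).2 ((hDilim t ht c a).2.congr fun i => hDisymm i t ht c a)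
  have hheat' : ∀ xc yc t, 0 ≤ t →
      HasDerivWithinAt (fun s => pc s xc yc) (-(lap bc mc (pc t xc) yc)) (Ici 0) t := by
    intro xc yc t ht
    have h := hheat yc xc t ht
    rw [show (fun z => pc t z xc) = pc t xc from funext fun z => hsymm t ht z xc] at h
    exact h.congr (fun s hs => hsymm s hs xc yc) (hsymm t ht xc yc)
  have hsum : ∀ t, 0 ≤ t → ∀ xc z, Summable fun zc : {zc : Xc // π zc = z} => pc t xc zc := by
    intro t ht xc z
    obtain ⟨F, hF, hpcF⟩ := hdom xc (t + 1) (by linarith)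
    exact summable_fiber_of_le hmc hmpos (hnn t ht xc) (hpcF · t ⟨ht, by linarith⟩) hF z
  rintro t ht x y xc rfl
  refine ⟨hsum t ht xc y, le_antisymm ?_ ?_⟩
  · refine hmin (π xc) (fun s => fiberSum π (pc s xc))
      (fun s hs z => tsum_nonneg fun zc => hnn s hs xc zc) (fun z => ?_)
      (fun z s hs => hasDerivWithinAt_fiberSum_of_heat hbij hbcompat hbsymm hbcsymm hbnn hbcnn
        hfinc hfin hmc hmpos (hnn · · xc) (hheat' xc) (hdom xc) z hs) t ht y
    rw [show pc 0 xc = _ from funext (h0 xc)]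
    exact fiberSum_delta hmc xc z
  · refine (hsum t ht xc y).tsum_le_of_sum_le fun s => le_of_tendsto
      (tendsto_finsetSum s fun yc _ => (hDilim t ht xc yc).2) (Eventually.of_forall fun i => ?_)
    exact sum_fiber_le_of_dirichlet hbij hbcompat hbsymm hbcsymm hbnn hbcnn hfinc hfin hmc hmcpos
      hdomsub (Dc i) (pDi i) (hDinn i) (hDivanish i) (hDiheat i) (hDi0 i) ht xc y s

/-- The heat kernel covering identity: if `p̃` is the minimal heat kernel of a regular
covering (obtained as the increasing limit of Dirichlet heat kernels along an exhaustion)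
and `p` is the minimal heat kernel of the base (minimal among nonnegative solutions and
dominating finitely supported subsolutions), then for all `t ≥ 0`, `x, y ∈ X` and
`x̃ ∈ π⁻¹(x)` one has `p_t(x,y) = ∑_{ỹ ∈ π⁻¹(y)} p̃_t(x̃,ỹ)`. -/
theorem stmt11 {X Xc : Type*} [Countable X] [Infinite X] [Countable Xc]
    [DecidableEq X] [DecidableEq Xc]
    (b : X → X → ℝ) (m : X → ℝ) (bc : Xc → Xc → ℝ) (mc : Xc → ℝ)
    (π : Xc → X) (Γ : Subgroup (Equiv.Perm Xc))
    (hwg : IsWeightedGraph b m) (hwgc : IsWeightedGraph bc mc)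
    (hcov : IsRegularCovering b m bc mc π Γ)
    -- the minimal heat kernel of the cover
    (pc : ℝ → Xc → Xc → ℝ)
    (hnn : ∀ t, 0 ≤ t → ∀ xc yc, 0 ≤ pc t xc yc)
    (h0 : ∀ xc yc : Xc, pc 0 xc yc = (if yc = xc then 1 else 0) / mc xc)
    (hheat : ∀ xc yc t, 0 ≤ t →
      HasDerivWithinAt (fun s => pc s xc yc)
        (-(lap bc mc (fun z => pc t z yc) xc)) (Set.Ici 0) t)
    (hinv : ∀ γ ∈ Γ, ∀ t, 0 ≤ t → ∀ xc yc, pc t (γ xc) (γ yc) = pc t xc yc)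
    (hsubmk : ∀ t, 0 ≤ t → ∀ xc,
      Summable (fun yc => pc t xc yc * mc yc) ∧ ∑' yc, pc t xc yc * mc yc ≤ 1)
    (hdom : ∀ (xc : Xc) (T : ℝ), 0 < T → ∃ F : Xc → ℝ,
      Summable (fun yc => F yc * mc yc) ∧
        ∀ yc, ∀ t ∈ Set.Icc (0 : ℝ) T, pc t xc yc ≤ F yc)
    -- an exhaustion of the cover by finite connected sets
    (Dc : ℕ → Finset Xc)
    (hDmono : Monotone Dc)
    (hDexh : ∀ xc : Xc, ∃ i, xc ∈ Dc i)
    (hDconn : ∀ i, ∀ a ∈ Dc i, ∀ c ∈ Dc i,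
      Relation.ReflTransGen (fun u v => 0 < bc u v ∧ u ∈ Dc i ∧ v ∈ Dc i) a c)
    -- the Dirichlet heat kernels of the exhaustion sets
    (pDi : ℕ → ℝ → Xc → Xc → ℝ)
    (hDinn : ∀ i t, 0 ≤ t → ∀ a c, 0 ≤ pDi i t a c)
    (hDisymm : ∀ i t, 0 ≤ t → ∀ a c, pDi i t a c = pDi i t c a)
    (hDivanish : ∀ i t, 0 ≤ t → ∀ a c,
      (¬(a ∈ Dc i ∧ ∀ e, 0 < bc a e → e ∈ Dc i) ∨
        ¬(c ∈ Dc i ∧ ∀ e, 0 < bc c e → e ∈ Dc i)) → pDi i t a c = 0)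
    (hDiheat : ∀ i a c, (c ∈ Dc i ∧ ∀ e, 0 < bc c e → e ∈ Dc i) → ∀ t, 0 ≤ t →
      HasDerivWithinAt (fun s => pDi i s a c)
        (-(lap bc mc (fun z => pDi i t a z) c)) (Set.Ici 0) t)
    (hDi0 : ∀ i a c, (a ∈ Dc i ∧ ∀ e, 0 < bc a e → e ∈ Dc i) →
      (c ∈ Dc i ∧ ∀ e, 0 < bc c e → e ∈ Dc i) →
      pDi i 0 a c = (if c = a then 1 else 0) / mc a)
    -- `pc` is the pointwise increasing limit of the Dirichlet kernels
    (hDilim : ∀ t, 0 ≤ t → ∀ a c,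
      Monotone (fun i => pDi i t a c) ∧
        Filter.Tendsto (fun i => pDi i t a c) Filter.atTop (𝓝 (pc t a c)))
    -- the minimal heat kernel of the base
    (p : ℝ → X → X → ℝ)
    (hpnn : ∀ t, 0 ≤ t → ∀ x y, 0 ≤ p t x y)
    (hp0 : ∀ x y : X, p 0 x y = (if y = x then 1 else 0) / m x)
    (hpheat : ∀ x y t, 0 ≤ t →
      HasDerivWithinAt (fun s => p s x y)
        (-(lap b m (fun z => p t z y) x)) (Set.Ici 0) t)
    -- minimality of `p` among nonnegative solutions of the heat equation
    (hmin : ∀ (x : X) (u : ℝ → X → ℝ),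
      (∀ t, 0 ≤ t → ∀ y, 0 ≤ u t y) →
      (∀ y : X, u 0 y = (if y = x then 1 else 0) / m x) →
      (∀ y t, 0 ≤ t →
        HasDerivWithinAt (fun s => u s y) (-(lap b m (u t) y)) (Set.Ici 0) t) →
      ∀ t, 0 ≤ t → ∀ y, p t x y ≤ u t y)
    -- `p` dominates finitely supported subsolutions of the heat equation
    (hdomsub : ∀ (x : X) (w : ℝ → X → ℝ) (S : Set X), S.Finite →
      (∀ t, 0 ≤ t → ∀ y, 0 ≤ w t y) →
      (∀ t (y : X), y ∉ S → w t y = 0) →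
      (∀ y ∈ S, ∀ t, 0 ≤ t → ∃ w' : ℝ,
        HasDerivWithinAt (fun s => w s y) w' (Set.Ici 0) t ∧
          lap b m (w t) y + w' ≤ 0) →
      (∀ y : X, w 0 y ≤ (if y = x then 1 else 0) / m x) →
      ∀ t, 0 ≤ t → ∀ y, w t y ≤ p t x y) :
    ∀ t, 0 ≤ t → ∀ (x y : X) (xc : Xc), π xc = x →
      Summable (fun yc : {yc : Xc // π yc = y} => pc t xc yc.1) ∧
        p t x y = ∑' yc : {yc : Xc // π yc = y}, pc t xc yc.1 :=
  stmt11_general b m bc mc π Γ hwg hwgc hcov pc hnn h0 hheat hdom Dc pDi hDinn hDisymm hDivanish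
    hDiheat hDi0 hDilim p hmin hdomsub
end

section
/- Let π : X̃→X, with deck group Γ, be a regular covering of a connected, locally finite weighted graph (X,b,m) in which every fiber π⁻¹(x) has exactly n elements. Let p̃ : [0,∞)×X̃×X̃→ℝ be Γ-invariant (p̃_t(γ(ã),γ(b̃))=p̃_t(ã,b̃) for all γ∈Γ) and positive semidefinite in the sense that ∑_{ã,b̃∈X̃} p̃_t(ã,b̃)·f(ã)·f(b̃)·m̃(ã)·m̃(b̃) ≥ 0 for every finitely supported f : X̃→ℝ and every t≥0, and let p : [0,∞)×X×X→ℝ satisfy p_t(x,y) = ∑_{ỹ∈π⁻¹(y)} p̃_t(x̃,ỹ) for all x̃∈π⁻¹(x). Then for every t≥0, x∈X and x̃∈π⁻¹(x): p_t(x,x) ≤ n·p̃_t(x̃,x̃). -/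
open Filter Topology

/-!
Restrict the kernel `p̃_t` to the fiber `S = π⁻¹(x)`, an `n × n` positive semidefinite matrix.
For such a matrix the Rayleigh quotient at the all-ones vector is at most the trace,
`∑_{a,c ∈ S} p̃_t(a,c) ≤ n ∑_{a ∈ S} p̃_t(a,a)`.
By the fiber-sum identity every row of this matrix sums to `p_t(x,x)`, and by `Γ`-invariance and
transitivity of `Γ` on `S` its diagonal is constantly `p̃_t(x̃,x̃)`; so the inequality reads
`n p_t(x,x) ≤ n² p̃_t(x̃,x̃)`.
-/

open Finset

theorem tsum_subtype_eq_sum_toFinset {β : Type*} {P : β → Prop} (h : {b | P b}.Finite)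
    (f : β → ℝ) : ∑' b : {b // P b}, f b = ∑ b ∈ h.toFinset, f b := by
  rw [← Finset.tsum_subtype]
  exact (Equiv.subtypeEquivRight (p := P) (q := (· ∈ h.toFinset)) fun b => by simp).tsum_eq
    fun b => f b.1

theorem sum_sum_mul_nonneg_of_tsum_tsum_nonneg {ι : Type*} (K : ι → ι → ℝ) (w : ι → ℝ)
    (hw : ∀ a, w a ≠ 0)
    (hK : ∀ f : ι → ℝ, (Function.support f).Finite →
      0 ≤ ∑' a, ∑' c, K a c * f a * f c * w a * w c)
    (S : Finset ι) (g : ι → ℝ) : 0 ≤ ∑ a ∈ S, ∑ c ∈ S, K a c * g a * g c := by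
  classical
  let f : ι → ℝ := fun a => if a ∈ S then g a / w a else 0
  have hf : ∀ a ∉ S, f a = 0 := fun a ha => if_neg ha
  have hfw : ∀ a ∈ S, f a * w a = g a := fun a ha => by simp [f, ha, hw a]
  have hsupp : (Function.support f).Finite :=
    S.finite_toSet.subset fun a ha => by_contra fun h => ha (hf a h)
  convert hK f hsupp using 1
  rw [tsum_eq_sum fun a ha => by simp [hf a ha]]
  refine sum_congr rfl fun a ha => ?_
  rw [tsum_eq_sum fun c hc => by simp [hf c hc]]
  refine sum_congr rfl fun c hc => ?_
  rw [← hfw a ha, ← hfw c hc]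
  ring

theorem Finset.sum_sum_le_card_mul_sum_diag {ι : Type*} [DecidableEq ι] (S : Finset ι)
    (K : ι → ι → ℝ) (hK : ∀ g : ι → ℝ, 0 ≤ ∑ a ∈ S, ∑ c ∈ S, K a c * g a * g c) :
    ∑ a ∈ S, ∑ c ∈ S, K a c ≤ #S * ∑ a ∈ S, K a a := by
  set n : ℝ := (#S : ℝ)
  set T := ∑ a ∈ S, ∑ c ∈ S, K a c
  -- the quadratic form at `n δ_a - 1`, summed over `a ∈ S`, is `n (n tr K - T)`
  have expand : ∀ a ∈ S, ∑ b ∈ S, ∑ c ∈ S,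
      K b c * (n * (if b = a then 1 else 0) - 1) * (n * (if c = a then 1 else 0) - 1) =
      n ^ 2 * K a a - n * ∑ c ∈ S, K a c - n * ∑ b ∈ S, K b a + T := by
    intro a ha
    simp only [mul_ite, mul_one, mul_zero, mul_sub, sub_mul, ite_mul, zero_mul, sum_sub_distrib,
      sum_ite_eq', ha, ↓reduceIte, sum_ite_irrel, ← sum_mul, sum_const_zero, T]
    ring
  have hcol : ∑ a ∈ S, ∑ b ∈ S, K b a = T := sum_comm
  have key : 0 ≤ n * (n * ∑ a ∈ S, K a a - T) := by
    calc 0 ≤ ∑ a ∈ S, (n ^ 2 * K a a - n * ∑ c ∈ S, K a c - n * ∑ b ∈ S, K b a + T) :=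
          sum_nonneg fun a ha => expand a ha ▸ hK _
      _ = n * (n * ∑ a ∈ S, K a a - T) := by
          rw [sum_add_distrib, sum_sub_distrib, sum_sub_distrib, ← mul_sum, ← mul_sum,
            ← mul_sum, hcol, sum_const, nsmul_eq_mul]
          ring
  rcases S.eq_empty_or_nonempty with rfl | hS
  · simp [T]
  · have hn : 0 < n := by positivity
    linarith [nonneg_of_mul_nonneg_right key hn]

theorem stmt12_general {X Xc : Type*}
    (b : X → X → ℝ) (m : X → ℝ) (bc : Xc → Xc → ℝ) (mc : Xc → ℝ)
    (π : Xc → X) (Γ : Subgroup (Equiv.Perm Xc))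
    (hwgc : IsWeightedGraph bc mc)
    (hcov : IsRegularCovering b m bc mc π Γ)
    (n : ℕ)
    (hfib : ∀ x : X, {yc : Xc | π yc = x}.Finite ∧ {yc : Xc | π yc = x}.ncard = n)
    (pc : ℝ → Xc → Xc → ℝ) (p : ℝ → X → X → ℝ)
    (hinv : ∀ γ ∈ Γ, ∀ t, 0 ≤ t → ∀ a c, pc t (γ a) (γ c) = pc t a c)
    (hpsd : ∀ t, 0 ≤ t → ∀ f : Xc → ℝ, (Function.support f).Finite →
      0 ≤ ∑' a, ∑' c, pc t a c * f a * f c * mc a * mc c)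
    (hid : ∀ t, 0 ≤ t → ∀ (x y : X) (xc : Xc), π xc = x →
      p t x y = ∑' yc : {yc : Xc // π yc = y}, pc t xc yc.1) :
    ∀ t, 0 ≤ t → ∀ (x : X) (xc : Xc), π xc = x →
      p t x x ≤ n * pc t xc xc := by
  intro t ht x xc hxc
  classical
  obtain ⟨-, -, -, -, hmc, -⟩ := hwgc
  obtain ⟨-, -, -, -, -, -, htrans⟩ := hcov
  set S := (hfib x).1.toFinset
  have hxcS : xc ∈ S := by simpa [S] using hxc
  have hcard : #S = n := by rw [← Set.ncard_eq_toFinset_card _ (hfib x).1]; exact (hfib x).2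
  have hrow : ∀ a ∈ S, ∑ c ∈ S, pc t a c = p t x x := fun a ha => by
    rw [hid t ht x x a (by simpa [S] using ha), tsum_subtype_eq_sum_toFinset]
  have hdiag : ∀ a ∈ S, pc t a a = pc t xc xc := fun a ha => by
    obtain ⟨γ, hγ, rfl⟩ := htrans xc a (hxc.trans ((hfib x).1.mem_toFinset.1 ha).symm)
    exact hinv γ hγ t ht xc xc
  have htrace := S.sum_sum_le_card_mul_sum_diag (pc t)
    (sum_sum_mul_nonneg_of_tsum_tsum_nonneg (pc t) mc (fun a => (hmc a).ne') (hpsd t ht) S)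
  rw [sum_congr rfl hrow, sum_congr rfl hdiag, sum_const, sum_const, hcard, nsmul_eq_mul,
    nsmul_eq_mul] at htrace
  have hn : (0 : ℝ) < n := by rw [← hcard]; exact_mod_cast card_pos.2 ⟨xc, hxcS⟩
  exact le_of_mul_le_mul_left htrace hn

/-- For a regular covering with `n` sheets, a `Γ`-invariant positive semidefinite kernel
`p̃` on the cover and the fiber-sum kernel `p` on the base satisfy
`p_t(x,x) ≤ n·p̃_t(x̃,x̃)` for every `x̃ ∈ π⁻¹(x)`. -/
theorem stmt12 {X Xc : Type*} [Countable X] [Countable Xc]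
    (b : X → X → ℝ) (m : X → ℝ) (bc : Xc → Xc → ℝ) (mc : Xc → ℝ)
    (π : Xc → X) (Γ : Subgroup (Equiv.Perm Xc))
    (hwg : IsWeightedGraph b m) (hwgc : IsWeightedGraph bc mc)
    (hcov : IsRegularCovering b m bc mc π Γ)
    (n : ℕ) (hn : 0 < n)
    (hfib : ∀ x : X, {yc : Xc | π yc = x}.Finite ∧ {yc : Xc | π yc = x}.ncard = n)
    (pc : ℝ → Xc → Xc → ℝ) (p : ℝ → X → X → ℝ)
    (hinv : ∀ γ ∈ Γ, ∀ t, 0 ≤ t → ∀ a c, pc t (γ a) (γ c) = pc t a c)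
    (hpsd : ∀ t, 0 ≤ t → ∀ f : Xc → ℝ, (Function.support f).Finite →
      0 ≤ ∑' a, ∑' c, pc t a c * f a * f c * mc a * mc c)
    (hid : ∀ t, 0 ≤ t → ∀ (x y : X) (xc : Xc), π xc = x →
      p t x y = ∑' yc : {yc : Xc // π yc = y}, pc t xc yc.1) :
    ∀ t, 0 ≤ t → ∀ (x : X) (xc : Xc), π xc = x →
      p t x x ≤ n * pc t xc xc :=
  stmt12_general b m bc mc π Γ hwgc hcov n hfib pc p hinv hpsd hid
end

section
/- Let π : X̃→X be a regular covering of a connected, locally finite, countably infinite weighted graph (X,b,m), with covering graph (X̃,b̃,m̃). Let p : (0,∞)×X×X→[0,∞) and p̃ : (0,∞)×X̃×X̃→[0,∞) satisfy p̃ ≥ 0 and the covering identity p_t(x,y) = ∑_{ỹ∈π⁻¹(y)} p̃_t(x̃,ỹ) for all t>0, x,y∈X, x̃∈π⁻¹(x). If the base satisfies the Feller property, i.e. for every t>0 and x∈X the function p_t(x,·) vanishes at infinity on X, then the cover satisfies the Feller property, i.e. for every t>0 and x̃∈X̃ the function p̃_t(x̃,·) vanishes at infinity on X̃. -/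
open Filter Topology

/-- If the base of a regular covering satisfies the Feller property, then so does the
cover: if `p_t(x,·)` vanishes at infinity for all `t > 0`, `x ∈ X`, then `p̃_t(x̃,·)`
vanishes at infinity for all `t > 0`, `x̃ ∈ X̃`. -/
theorem stmt14 {X Xc : Type*} [Countable X] [Infinite X] [Countable Xc]
    (b : X → X → ℝ) (m : X → ℝ) (bc : Xc → Xc → ℝ) (mc : Xc → ℝ)
    (π : Xc → X) (Γ : Subgroup (Equiv.Perm Xc))
    (hwg : IsWeightedGraph b m) (hwgc : IsWeightedGraph bc mc)
    (hcov : IsRegularCovering b m bc mc π Γ)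
    (p : ℝ → X → X → ℝ) (pc : ℝ → Xc → Xc → ℝ)
    (hpcnn : ∀ t, 0 < t → ∀ xc yc, 0 ≤ pc t xc yc)
    (hid : ∀ t, 0 < t → ∀ (x y : X) (xc : Xc), π xc = x →
      Summable (fun yc : {yc : Xc // π yc = y} => pc t xc yc.1) ∧
        p t x y = ∑' yc : {yc : Xc // π yc = y}, pc t xc yc.1)
    (hFeller : ∀ t, 0 < t → ∀ x : X, VanishesAtInfty (fun y => p t x y)) :
    ∀ t, 0 < t → ∀ xc : Xc, VanishesAtInfty (fun yc => pc t xc yc) := by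
  intro t ht xc ε hε
  set x := π xc with hx
  have hS : {y | ε ≤ |p t x y|}.Finite := hFeller t ht x ε hε
  -- each fiber contributes finitely many large terms
  have hfin : ∀ y : X, {yc | π yc = y ∧ ε ≤ pc t xc yc}.Finite := by
    intro y
    have hs := (hid t ht x y xc rfl).1
    have h1 : {z : {yc : Xc // π yc = y} | ε ≤ pc t xc z.1}.Finite := by
      have h2 := hs.tendsto_cofinite_zero (Metric.ball_mem_nhds 0 hε)
      rw [Filter.mem_map, Filter.mem_cofinite] at h2
      refine h2.subset fun z hz => ?_
      simp only [Set.mem_compl_iff, Set.mem_preimage, Metric.mem_ball,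
        Real.dist_eq, sub_zero, not_lt]
      exact le_trans hz (le_abs_self _)
    have := h1.image Subtype.val
    refine this.subset fun yc ⟨h1', h2'⟩ => ⟨⟨yc, h1'⟩, h2', rfl⟩
  have hsub : {yc | ε ≤ |pc t xc yc|} ⊆
      ⋃ y ∈ {y | ε ≤ |p t x y|}, {yc | π yc = y ∧ ε ≤ pc t xc yc} := by
    intro yc hyc
    have hnn := hpcnn t ht xc yc
    have hle : ε ≤ pc t xc yc := by rwa [Set.mem_setOf_eq, abs_of_nonneg hnn] at hyc
    have hple : pc t xc yc ≤ p t x (π yc) := by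
      obtain ⟨hsum, heq⟩ := hid t ht x (π yc) xc rfl
      rw [heq]
      exact Summable.le_tsum hsum ⟨yc, rfl⟩ (fun z _ => hpcnn t ht xc z.1)
    have hmem : π yc ∈ {y | ε ≤ |p t x y|} := by
      exact le_trans (le_trans hle hple) (le_abs_self _)
    exact Set.mem_biUnion hmem ⟨rfl, hle⟩
  exact (hS.biUnion fun y _ => hfin y).subset hsub
end

section
/- Let π : X̃→X be a regular covering of a connected, locally finite, countably infinite weighted graph (X,b,m), with covering graph (X̃,b̃,m̃), in which every fiber π⁻¹(x) has exactly n < ∞ elements. Let p and p̃ be nonnegative kernels satisfying the covering identity p_t(x,y) = ∑_{ỹ∈π⁻¹(y)} p̃_t(x̃,ỹ) for all t>0, x,y∈X, x̃∈π⁻¹(x). If the cover satisfies the Feller property, i.e. for every t>0 and x̃∈X̃ the function p̃_t(x̃,·) vanishes at infinity on X̃, then the base satisfies the Feller property, i.e. for every t>0 and x∈X the function p_t(x,·) vanishes at infinity on X. -/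
open Filter Topology

/-- For a regular covering with finitely many (`n`) sheets, if the cover satisfies the
Feller property then so does the base. -/
theorem stmt15 {X Xc : Type*} [Countable X] [Infinite X] [Countable Xc]
    (b : X → X → ℝ) (m : X → ℝ) (bc : Xc → Xc → ℝ) (mc : Xc → ℝ)
    (π : Xc → X) (Γ : Subgroup (Equiv.Perm Xc))
    (hwg : IsWeightedGraph b m) (hwgc : IsWeightedGraph bc mc)
    (hcov : IsRegularCovering b m bc mc π Γ)
    (n : ℕ) (hn : 0 < n)
    (hfib : ∀ x : X, {yc : Xc | π yc = x}.Finite ∧ {yc : Xc | π yc = x}.ncard = n)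
    (p : ℝ → X → X → ℝ) (pc : ℝ → Xc → Xc → ℝ)
    (hpnn : ∀ t, 0 < t → ∀ x y, 0 ≤ p t x y)
    (hpcnn : ∀ t, 0 < t → ∀ xc yc, 0 ≤ pc t xc yc)
    (hid : ∀ t, 0 < t → ∀ (x y : X) (xc : Xc), π xc = x →
      p t x y = ∑' yc : {yc : Xc // π yc = y}, pc t xc yc.1)
    (hFellerCover : ∀ t, 0 < t → ∀ xc : Xc,
      VanishesAtInfty (fun yc => pc t xc yc)) :
    ∀ t, 0 < t → ∀ x : X, VanishesAtInfty (fun y => p t x y) := by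
  intro t ht x ε hε
  obtain ⟨xc, hxc⟩ := hcov.1 x
  have hεn : (0:ℝ) < ε / n := div_pos hε (by exact_mod_cast hn)
  have hS : {yc : Xc | ε / n ≤ |pc t xc yc|}.Finite := hFellerCover t ht xc (ε/n) hεn
  apply Set.Finite.subset (hS.image π)
  intro y hy
  simp only [Set.mem_setOf_eq] at hy
  have hp : ε ≤ p t x y := by
    have := hpnn t ht x y
    rwa [abs_of_nonneg this] at hy
  -- fiber finite
  haveI : Fintype {yc : Xc // π yc = y} := (hfib y).1.fintype
  have hcard : Fintype.card {yc : Xc // π yc = y} = n := by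
    rw [← Nat.card_eq_fintype_card]; exact (hfib y).2
  have hsum : p t x y = ∑ yc : {yc : Xc // π yc = y}, pc t xc yc.1 := by
    rw [hid t ht x y xc hxc, tsum_fintype]
  by_contra hcon
  have hall : ∀ yc : {yc : Xc // π yc = y}, pc t xc yc.1 < ε / n := by
    intro yc
    by_contra h
    push_neg at h
    exact hcon ⟨yc.1, by
      simp only [Set.mem_setOf_eq]
      rw [abs_of_nonneg (hpcnn t ht xc yc.1)]
      exact ⟨h, yc.2⟩⟩
  have hne : Nonempty {yc : Xc // π yc = y} := by
    rw [← Fintype.card_pos_iff, hcard]; exact hn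
  have : p t x y < ε := by
    rw [hsum]
    calc ∑ yc : {yc : Xc // π yc = y}, pc t xc yc.1
        < ∑ _yc : {yc : Xc // π yc = y}, (ε / n) :=
          Finset.sum_lt_sum_of_nonempty (Finset.univ_nonempty) (fun i _ => hall i)
      _ = n * (ε / n) := by rw [Finset.sum_const, Finset.card_univ, hcard, nsmul_eq_mul]
      _ = ε := by field_simp
  linarith
end
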